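/- arXiv:1305.3006 — 4 statements merged into one kernel-verified Lean document; each statement's English description precedes it below -/
import Mathlib

section
/- For all real numbers a > 0 and r > 0, the mean of the logarithm under the Gamma distribution with shape a and rate r satisfies ∫_0^∞ (log x) · p_{a,r}(x) dx = ψ(a) − log r, where ψ(a) denotes the derivative at a of the function s ↦ log Γ(s). -/
/-!
Differentiating Euler's integral under the integral sign gives
`Γ'(a) = ∫₀^∞ log t · e^{-t} t^{a-1} dt`. Substituting `t = r x` in this integral and in Euler's
integral for `Γ(a)`, and using `log (r x) = log r + log x`, turns the log-mean of the Gamma density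
into `(Γ'(a) - log r · Γ(a)) / Γ(a)`, which is `ψ(a) - log r`.
-/

noncomputable def gammaPdf (a r x : ℝ) : ℝ :=
  if 0 < x then r ^ a / Real.Gamma a * x ^ (a - 1) * Real.exp (-(r * x)) else 0

open MeasureTheory Real Set Filter Topology Asymptotics

namespace Real

lemma mellinConvergent_log_smul_exp_neg {a : ℝ} (ha : 0 < a) :
    MellinConvergent (fun t : ℝ => log t • ((exp (-t) : ℝ) : ℂ)) (a : ℂ) := by
  refine (mellin_hasDerivAt_of_isBigO_rpow (E := ℂ) ?_ ?_ (lt_add_one _) ?_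
    (by simpa using ha)).1
  · refine (Continuous.continuousOn ?_).locallyIntegrableOn measurableSet_Ioi
    fun_prop
  · rw [← isBigO_norm_left]
    simp_rw [Complex.norm_real, isBigO_norm_left]
    simpa only [neg_one_mul] using (isLittleO_exp_neg_mul_rpow_atTop zero_lt_one _).isBigO
  · simp_rw [neg_zero, rpow_zero]
    refine isBigO_const_of_tendsto (?_ : Tendsto _ _ (𝓝 (1 : ℂ))) one_ne_zero
    rw [(by simp : (1 : ℂ) = exp (-0))]
    exact (by fun_prop : Continuous fun t : ℝ => ((exp (-t) : ℝ) : ℂ)).continuousWithinAt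

lemma integrableOn_log_mul_Gamma_integrand {a : ℝ} (ha : 0 < a) :
    IntegrableOn (fun t : ℝ => log t * (exp (-t) * t ^ (a - 1))) (Ioi 0) := by
  refine IntegrableOn.congr_fun (mellinConvergent_log_smul_exp_neg ha).re (fun t ht => ?_)
    measurableSet_Ioi
  have hexp : (a : ℂ) - 1 = ((a - 1 : ℝ) : ℂ) := by push_cast; ring
  simp only [hexp, ← Complex.ofReal_cpow (le_of_lt ht), smul_eq_mul, Complex.real_smul,
    ← Complex.ofReal_mul, Complex.ofReal_re, RCLike.re_to_complex]
  ring

lemma hasDerivAt_Gamma_eq_integral {a : ℝ} (ha : 0 < a) :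
    HasDerivAt Gamma (∫ t in Ioi 0, log t * (exp (-t) * t ^ (a - 1))) a := by
  have hcomplex := Complex.hasDerivAt_GammaIntegral (s := (a : ℂ)) (by simpa using ha)
  have hintegral : ∫ t : ℝ in Ioi 0, (t : ℂ) ^ ((a : ℂ) - 1) * (log t * exp (-t))
      = ((∫ t in Ioi 0, log t * (exp (-t) * t ^ (a - 1)) : ℝ) : ℂ) := by
    rw [← integral_complex_ofReal]
    refine setIntegral_congr_fun measurableSet_Ioi fun t ht => ?_
    have hexp : (a : ℂ) - 1 = ((a - 1 : ℝ) : ℂ) := by push_cast; ring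
    rw [hexp, ← Complex.ofReal_cpow (le_of_lt ht)]
    push_cast
    ring
  rw [hintegral] at hcomplex
  refine hcomplex.real_of_complex.congr_of_eventuallyEq ?_
  filter_upwards [Ioi_mem_nhds ha] with s hs
  rw [← Complex.Gamma_eq_integral (by simpa using hs), Complex.Gamma_ofReal, Complex.ofReal_re]

lemma integral_log_mul_rpow_mul_exp_neg_mul {a r : ℝ} (ha : 0 < a) (hr : 0 < r) :
    ∫ x in Ioi 0, log x * (x ^ (a - 1) * exp (-(r * x)))
      = (deriv Gamma a - log r * Gamma a) / r ^ a := by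
  set f : ℝ → ℝ := fun t => log t * (exp (-t) * t ^ (a - 1))
  set g : ℝ → ℝ := fun t => exp (-t) * t ^ (a - 1)
  have hf : IntegrableOn (fun x => f (r * x)) (Ioi 0) := by
    rw [integrableOn_Ioi_comp_mul_left_iff f 0 hr, mul_zero]
    exact integrableOn_log_mul_Gamma_integrand ha
  have hg : IntegrableOn (fun x => g (r * x)) (Ioi 0) := by
    rw [integrableOn_Ioi_comp_mul_left_iff g 0 hr, mul_zero]
    exact GammaIntegral_convergent ha
  have hr_pow : r ^ (1 - a) * r ^ (a - 1) = 1 := by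
    rw [← rpow_add hr]
    norm_num
  have hscale : ∀ x ∈ Ioi (0 : ℝ), log x * (x ^ (a - 1) * exp (-(r * x)))
      = r ^ (1 - a) * (f (r * x) - log r * g (r * x)) := by
    intro x hx
    simp only [f, g, log_mul hr.ne' (ne_of_gt hx), mul_rpow hr.le (le_of_lt hx)]
    linear_combination (-(log x * x ^ (a - 1) * exp (-(r * x)))) * hr_pow
  calc ∫ x in Ioi 0, log x * (x ^ (a - 1) * exp (-(r * x)))
      = r ^ (1 - a) * ((∫ x in Ioi 0, f (r * x)) - log r * ∫ x in Ioi 0, g (r * x)) := by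
        rw [setIntegral_congr_fun measurableSet_Ioi hscale, integral_const_mul,
          integral_sub hf (hg.const_mul _), integral_const_mul]
    _ = r ^ (1 - a) * (r⁻¹ * deriv Gamma a - log r * (r⁻¹ * Gamma a)) := by
        rw [integral_comp_mul_left_Ioi f 0 hr, integral_comp_mul_left_Ioi g 0 hr, mul_zero,
          smul_eq_mul, smul_eq_mul, (hasDerivAt_Gamma_eq_integral ha).deriv,
          Gamma_eq_integral ha]
    _ = (deriv Gamma a - log r * Gamma a) / r ^ a := by
        rw [rpow_sub hr, rpow_one]
        field_simp

end Real

/-- For all `a > 0`, `r > 0`, the mean of `log` under the Gamma distribution with shape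
`a` and rate `r` is `ψ(a) - log r`, where `ψ(a)` is the derivative at `a` of
`s ↦ log Γ(s)` (the digamma function). -/
theorem gamma_log_mean (a r : ℝ) (ha : 0 < a) (hr : 0 < r) :
    (∫ x in Set.Ioi (0 : ℝ), Real.log x * gammaPdf a r x)
      = deriv (fun s : ℝ => Real.log (Real.Gamma s)) a - Real.log r := by
  have hGamma : Gamma a ≠ 0 := (Gamma_pos_of_pos ha).ne'
  have hGamma' := hasDerivAt_Gamma_eq_integral ha
  have hlogGamma : deriv (fun s => log (Gamma s)) a = deriv Gamma a / Gamma a := by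
    rw [(hGamma'.log hGamma).deriv, hGamma'.deriv]
  have hpdf : ∀ x ∈ Ioi (0 : ℝ), log x * gammaPdf a r x
      = r ^ a / Gamma a * (log x * (x ^ (a - 1) * exp (-(r * x)))) := by
    intro x hx
    rw [gammaPdf, if_pos (mem_Ioi.mp hx)]
    ring
  rw [setIntegral_congr_fun measurableSet_Ioi hpdf, integral_const_mul,
    integral_log_mul_rpow_mul_exp_neg_mul ha hr, hlogGamma]
  field_simp
end

section
/- Let E(M) = ∫_0^∞ (x − log x) · p_{M,M}(x) dx denote the expected value of η − log η when η is Gamma distributed with shape M and rate M. Then, as M → +∞, E(M) − (1 + 1/(2M) + 1/(12M²)) = O(1/M³); that is, the function M ↦ E(M) − (1 + 1/(2M) + 1/(12M²)) is big-O of M^{−3} along the filter at infinity on ℝ. -/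
/-- `E(M) = ∫_0^∞ (x - log x) p_{M,M}(x) dx`, the expectation of `η - log η` for
`η` Gamma-distributed with shape `M` and rate `M`. -/
noncomputable def gammaDiscrepancyMean (M : ℝ) : ℝ :=
  ∫ x in Set.Ioi (0 : ℝ), (x - Real.log x) * gammaPdf M M x

/-!
Substituting `t = M x` turns `E(M)` into `1 + log M - ψ(M)`, where
`ψ(a) = Γ(a)⁻¹ ∫₀^∞ e^{-t} t^{a-1} log t dt` is the digamma function. Integration by parts gives
`ψ(a + 1) = ψ(a) + 1/a`, and integrating the tangent-line bounds of the concave `log` against the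
Gamma kernel gives `log (a - 1) ≤ ψ(a) ≤ log a`. Hence the remainder
`R(a) = log a - ψ(a) - 1/(2a) - 1/(12a²)` tends to `0`, and by the Taylor expansion of
`log (1 + 1/a)` it changes by at most `3/a⁴ ≤ (a-1)⁻³ - a⁻³` from `a` to `a + 1`;
telescoping gives `|R(a)| ≤ (a - 1)⁻³`.
-/

open Real MeasureTheory Set Filter Topology

noncomputable def gammaKernel (a t : ℝ) : ℝ := exp (-t) * t ^ (a - 1)

-- This is `Γ'(a)`, so `gammaLogIntegral a / Gamma a` is the digamma function; only the
-- recurrence and the bounds proved below are used, never that identification.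
noncomputable def gammaLogIntegral (a : ℝ) : ℝ := ∫ t in Ioi 0, gammaKernel a t * log t

noncomputable def logSubDigamma (a : ℝ) : ℝ := log a - gammaLogIntegral a / Gamma a

section GammaKernel

variable {a t : ℝ}

lemma integrableOn_gammaKernel (ha : 0 < a) : IntegrableOn (gammaKernel a) (Ioi 0) :=
  GammaIntegral_convergent ha

lemma integral_gammaKernel (ha : 0 < a) : ∫ t in Ioi 0, gammaKernel a t = Gamma a :=
  (Gamma_eq_integral ha).symm

lemma gammaKernel_nonneg (ht : 0 ≤ t) : 0 ≤ gammaKernel a t := by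
  unfold gammaKernel; positivity

lemma gammaKernel_mul_self (ht : t ≠ 0) : gammaKernel a t * t = gammaKernel (a + 1) t := by
  rw [gammaKernel, gammaKernel, add_sub_cancel_right, mul_assoc, ← rpow_add_one ht, sub_add_cancel]

lemma abs_log_le_rpow_add_rpow_neg_div {ε : ℝ} (hε : 0 < ε) (ht : 0 < t) :
    |log t| ≤ (t ^ ε + t ^ (-ε)) / ε := by
  have hle := log_le_rpow_div ht.le hε
  have hge := log_le_rpow_div (inv_pos.2 ht).le hε
  rw [log_inv, inv_rpow ht.le, ← rpow_neg ht.le] at hge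
  have : 0 ≤ t ^ ε / ε := by positivity
  have : 0 ≤ t ^ (-ε) / ε := by positivity
  rw [abs_le, add_div]
  constructor <;> linarith

lemma integrableOn_gammaKernel_mul_log (ha : 0 < a) :
    IntegrableOn (fun t => gammaKernel a t * log t) (Ioi 0) := by
  have hε : 0 < a / 2 := half_pos ha
  have hbound : IntegrableOn
      (fun t => (gammaKernel (a + a / 2) t + gammaKernel (a - a / 2) t) / (a / 2)) (Ioi 0) :=
    ((integrableOn_gammaKernel (by linarith)).add
      (integrableOn_gammaKernel (by linarith))).div_const _
  refine hbound.mono' (by unfold gammaKernel; fun_prop) ?_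
  filter_upwards [ae_restrict_mem measurableSet_Ioi] with t (ht : 0 < t)
  rw [norm_mul, norm_of_nonneg (gammaKernel_nonneg ht.le), norm_eq_abs]
  calc gammaKernel a t * |log t|
      ≤ gammaKernel a t * ((t ^ (a / 2) + t ^ (-(a / 2))) / (a / 2)) := by
        gcongr
        · exact gammaKernel_nonneg ht.le
        · exact abs_log_le_rpow_add_rpow_neg_div hε ht
    _ = _ := by
        rw [gammaKernel, gammaKernel, gammaKernel, show a + a / 2 - 1 = (a - 1) + a / 2 by ring,
          show a - a / 2 - 1 = (a - 1) + -(a / 2) by ring, rpow_add ht, rpow_add ht]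
        ring

end GammaKernel

section GammaLogIntegral

variable {a : ℝ}

lemma hasDerivAt_gammaKernel_mul_log {t : ℝ} (ht : 0 < t) :
    HasDerivAt (fun s => gammaKernel (a + 1) s * log s)
      (a * (gammaKernel a t * log t) + gammaKernel a t - gammaKernel (a + 1) t * log t) t := by
  have hexp : HasDerivAt (fun s => exp (-s)) (-exp (-t)) t := by
    simpa using (hasDerivAt_neg t).exp
  have hpow : HasDerivAt (fun s => s ^ a) (a * t ^ (a - 1)) t :=
    hasDerivAt_rpow_const (Or.inl ht.ne')
  have hfun : (fun s => gammaKernel (a + 1) s * log s) =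
      ((fun s => exp (-s)) * fun s => s ^ a) * log := by
    funext s; simp [gammaKernel]
  rw [hfun]
  refine ((hexp.mul hpow).mul (hasDerivAt_log ht.ne')).congr_deriv ?_
  simp only [gammaKernel, Pi.mul_apply, add_sub_cancel_right]
  rw [rpow_sub_one ht.ne']
  field_simp
  ring

lemma gammaLogIntegral_add_one (ha : 0 < a) :
    gammaLogIntegral (a + 1) = a * gammaLogIntegral a + Gamma a := by
  have hcont : ContinuousWithinAt (fun t => gammaKernel (a + 1) t * log t) (Ici 0) 0 := by
    rw [← continuousWithinAt_Ioi_iff_Ici, ContinuousWithinAt]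
    have hexp : Tendsto (fun t => exp (-t)) (𝓝[>] 0) (𝓝 1) := by
      simpa using (Continuous.tendsto (by fun_prop : Continuous fun t : ℝ => exp (-t)) 0).mono_left
        nhdsWithin_le_nhds
    simpa [gammaKernel, mul_assoc, mul_comm (log _)] using
      hexp.mul (tendsto_log_mul_rpow_nhdsGT_zero ha)
  have hlim : Tendsto (fun t => gammaKernel (a + 1) t * log t) atTop (𝓝 0) := by
    refine squeeze_zero_norm' ?_ (tendsto_rpow_mul_exp_neg_mul_atTop_nhds_zero (a + 1) 1 one_pos)
    filter_upwards [eventually_ge_atTop 1] with t ht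
    have ht0 : 0 < t := by linarith
    rw [norm_mul, norm_of_nonneg (gammaKernel_nonneg ht0.le), norm_of_nonneg (log_nonneg ht)]
    calc gammaKernel (a + 1) t * log t ≤ gammaKernel (a + 1) t * t := by
          gcongr
          · exact gammaKernel_nonneg ht0.le
          · exact (log_le_sub_one_of_pos ht0).trans (by linarith)
      _ = t ^ (a + 1) * exp (-1 * t) := by
          rw [gammaKernel_mul_self ht0.ne', gammaKernel, add_sub_cancel_right, neg_one_mul,
            mul_comm]
  have hint_a : IntegrableOn (fun t => a * (gammaKernel a t * log t) + gammaKernel a t) (Ioi 0) :=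
    ((integrableOn_gammaKernel_mul_log ha).const_mul a).add (integrableOn_gammaKernel ha)
  have hint_succ := integrableOn_gammaKernel_mul_log (by linarith : 0 < a + 1)
  have key := integral_Ioi_of_hasDerivAt_of_tendsto hcont
    (fun t ht => hasDerivAt_gammaKernel_mul_log ht) (hint_a.sub hint_succ) hlim
  rw [integral_sub hint_a hint_succ,
    integral_add ((integrableOn_gammaKernel_mul_log ha).const_mul a) (integrableOn_gammaKernel ha),
    integral_const_mul, integral_gammaKernel ha] at key
  simp only [log_zero, mul_zero, sub_zero] at key
  rw [gammaLogIntegral, gammaLogIntegral]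
  linarith

end GammaLogIntegral

lemma log_le_log_add_div_sub_one {c t : ℝ} (hc : 0 < c) (ht : 0 < t) :
    log t ≤ log c + t / c - 1 := by
  have := log_le_sub_one_of_pos (div_pos ht hc)
  rw [log_div ht.ne' hc.ne'] at this
  linarith

section GammaLogIntegralBounds

variable {a : ℝ}

lemma gammaLogIntegral_le_log_mul_Gamma (ha : 0 < a) : gammaLogIntegral a ≤ log a * Gamma a := by
  have hint_a := (integrableOn_gammaKernel ha).const_mul (log a - 1)
  have hint_succ := (integrableOn_gammaKernel (by linarith : 0 < a + 1)).const_mul a⁻¹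
  calc gammaLogIntegral a
      ≤ ∫ t in Ioi 0, (log a - 1) * gammaKernel a t + a⁻¹ * gammaKernel (a + 1) t := by
        refine setIntegral_mono_on (integrableOn_gammaKernel_mul_log ha) (hint_a.add hint_succ)
          measurableSet_Ioi fun t (ht : 0 < t) => ?_
        rw [← gammaKernel_mul_self ht.ne']
        have := mul_le_mul_of_nonneg_left (log_le_log_add_div_sub_one ha ht)
          (gammaKernel_nonneg (a := a) ht.le)
        field_simp at this ⊢
        linarith
    _ = log a * Gamma a := by
        rw [integral_add hint_a hint_succ, integral_const_mul, integral_const_mul,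
          integral_gammaKernel ha, integral_gammaKernel (by linarith), Gamma_add_one ha.ne']
        field_simp
        ring

lemma log_sub_one_mul_Gamma_le_gammaLogIntegral (ha : 1 < a) :
    log (a - 1) * Gamma a ≤ gammaLogIntegral a := by
  have ha₀ : 0 < a - 1 := by linarith
  have hint_a := (integrableOn_gammaKernel (by linarith : 0 < a)).const_mul (log (a - 1) + 1)
  have hint_pred := (integrableOn_gammaKernel ha₀).const_mul (a - 1)
  calc log (a - 1) * Gamma a
      = ∫ t in Ioi 0, (log (a - 1) + 1) * gammaKernel a t - (a - 1) * gammaKernel (a - 1) t := by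
        rw [integral_sub hint_a hint_pred, integral_const_mul, integral_const_mul,
          integral_gammaKernel (by linarith), integral_gammaKernel ha₀,
          ← Gamma_add_one ha₀.ne', sub_add_cancel]
        ring
    _ ≤ gammaLogIntegral a := by
        refine setIntegral_mono_on (hint_a.sub hint_pred) (integrableOn_gammaKernel_mul_log
          (by linarith)) measurableSet_Ioi fun t (ht : 0 < t) => ?_
        rw [← sub_add_cancel a 1, ← gammaKernel_mul_self ht.ne', add_sub_cancel_right]
        -- the tangent line of `log` at `t`, evaluated at `a - 1`
        have := mul_le_mul_of_nonneg_left (log_le_log_add_div_sub_one ht ha₀)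
          (gammaKernel_nonneg (a := a - 1) ht.le)
        field_simp at this ⊢
        linarith

end GammaLogIntegralBounds

section LogSubDigamma

variable {a : ℝ}

lemma logSubDigamma_nonneg (ha : 0 < a) : 0 ≤ logSubDigamma a := by
  rw [logSubDigamma, sub_nonneg, div_le_iff₀ (Gamma_pos_of_pos ha)]
  exact gammaLogIntegral_le_log_mul_Gamma ha

lemma logSubDigamma_le (ha : 1 < a) : logSubDigamma a ≤ 1 / (a - 1) := by
  have ha₀ : 0 < a - 1 := by linarith
  have hψ : log (a - 1) ≤ gammaLogIntegral a / Gamma a := by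
    rw [le_div_iff₀ (Gamma_pos_of_pos (by linarith))]
    exact log_sub_one_mul_Gamma_le_gammaLogIntegral ha
  have hlog := log_le_log_add_div_sub_one ha₀ (by linarith : 0 < a)
  have : a / (a - 1) - 1 = 1 / (a - 1) := by field_simp; ring
  rw [logSubDigamma]
  linarith

lemma logSubDigamma_sub_add_one (ha : 0 < a) :
    logSubDigamma a - logSubDigamma (a + 1) = 1 / a - log (1 + 1 / a) := by
  have hψ : gammaLogIntegral (a + 1) / Gamma (a + 1) = gammaLogIntegral a / Gamma a + 1 / a := by
    rw [gammaLogIntegral_add_one ha, Gamma_add_one ha.ne']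
    field_simp [(Gamma_pos_of_pos ha).ne']
  have hlog : log (1 + 1 / a) = log (a + 1) - log a := by
    rw [← log_div (by linarith) ha.ne']
    congr 1
    field_simp
  rw [logSubDigamma, logSubDigamma, hψ, hlog]
  ring

lemma tendsto_logSubDigamma_atTop : Tendsto logSubDigamma atTop (𝓝 0) := by
  have hupper : Tendsto (fun a : ℝ => 1 / (a - 1)) atTop (𝓝 0) := by
    simpa [Function.comp_def, sub_eq_add_neg] using
      tendsto_inv_atTop_zero.comp (tendsto_atTop_add_const_right _ (-1) tendsto_id)
  refine tendsto_of_tendsto_of_tendsto_of_le_of_le' tendsto_const_nhds hupper ?_ ?_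
  · filter_upwards [eventually_gt_atTop 0] with a ha using logSubDigamma_nonneg ha
  · filter_upwards [eventually_gt_atTop 1] with a ha using logSubDigamma_le ha

end LogSubDigamma

lemma setIntegral_mul_gammaPdf (f : ℝ → ℝ) (a : ℝ) {r : ℝ} (hr : 0 < r) :
    ∫ x in Ioi 0, f x * gammaPdf a r x =
      (Gamma a)⁻¹ * ∫ t in Ioi 0, f (t / r) * gammaKernel a t := by
  have hsubst := integral_comp_mul_left_Ioi (fun t => f (t / r) * gammaKernel a t) 0 hr
  rw [mul_zero, smul_eq_mul] at hsubst
  calc ∫ x in Ioi 0, f x * gammaPdf a r x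
      = ∫ x in Ioi 0, (Gamma a)⁻¹ * r * (f (r * x / r) * gammaKernel a (r * x)) := by
        refine setIntegral_congr_fun measurableSet_Ioi fun x (hx : 0 < x) => ?_
        rw [gammaPdf, if_pos hx, gammaKernel, mul_div_cancel_left₀ _ hr.ne', mul_rpow hr.le hx.le,
          rpow_sub_one hr.ne']
        field_simp
    _ = (Gamma a)⁻¹ * ∫ t in Ioi 0, f (t / r) * gammaKernel a t := by
        rw [integral_const_mul, hsubst]
        field_simp

lemma gammaDiscrepancyMean_eq {M : ℝ} (hM : 0 < M) :
    gammaDiscrepancyMean M = 1 + logSubDigamma M := by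
  have hint_succ := (integrableOn_gammaKernel (by linarith : 0 < M + 1)).const_mul M⁻¹
  have hint_log := integrableOn_gammaKernel_mul_log hM
  have hint_diff : IntegrableOn (fun t => M⁻¹ * gammaKernel (M + 1) t - gammaKernel M t * log t)
      (Ioi 0) := hint_succ.sub hint_log
  have hint := (integrableOn_gammaKernel hM).const_mul (log M)
  have hintegrand : ∀ t ∈ Ioi (0 : ℝ), (t / M - log (t / M)) * gammaKernel M t =
      M⁻¹ * gammaKernel (M + 1) t - gammaKernel M t * log t + log M * gammaKernel M t := by
    intro t (ht : 0 < t)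
    rw [← gammaKernel_mul_self ht.ne', log_div ht.ne' hM.ne']
    ring
  rw [gammaDiscrepancyMean, setIntegral_mul_gammaPdf _ _ hM, setIntegral_congr_fun measurableSet_Ioi
    hintegrand, integral_add hint_diff hint, integral_sub hint_succ hint_log,
    integral_const_mul, integral_const_mul, integral_gammaKernel (by linarith),
    integral_gammaKernel hM, Gamma_add_one hM.ne', logSubDigamma, gammaLogIntegral]
  field_simp [(Gamma_pos_of_pos hM).ne']
  ring

lemma abs_le_of_tendsto_of_abs_sub_le_sub {f u : ℝ → ℝ} {x₀ x : ℝ}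
    (hf : Tendsto f atTop (𝓝 0)) (hu : ∀ y ≥ x₀, 0 ≤ u y)
    (hstep : ∀ y ≥ x₀, |f y - f (y + 1)| ≤ u y - u (y + 1)) (hx : x₀ ≤ x) :
    |f x| ≤ u x := by
  have htelescope : ∀ n : ℕ, |f x - f (x + n)| ≤ u x - u (x + n) := by
    intro n
    induction n with
    | zero => simp
    | succ n ih =>
      have := hstep (x + n) (by linarith [n.cast_nonneg (α := ℝ)])
      push_cast
      rw [← add_assoc]
      linarith [abs_sub_le (f x) (f (x + n)) (f (x + n + 1))]
  have hlim : Tendsto (fun n : ℕ => u x + |f (x + n)|) atTop (𝓝 (u x)) := by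
    simpa using tendsto_const_nhds.add
      (hf.comp (tendsto_atTop_add_const_left _ x tendsto_natCast_atTop_atTop)).abs
  refine ge_of_tendsto' hlim fun n => ?_
  linarith [abs_sub_abs_le_abs_sub (f x) (f (x + n)), htelescope n,
    hu (x + n) (by linarith [n.cast_nonneg (α := ℝ)])]

lemma abs_log_one_add_sub_le {u : ℝ} (hu₀ : 0 ≤ u) (hu : u ≤ 1 / 2) :
    |log (1 + u) - (u - u ^ 2 / 2 + u ^ 3 / 3)| ≤ 2 * u ^ 4 := by
  have h := abs_log_sub_add_sum_range_le (x := -u) (by rw [abs_neg, abs_of_nonneg hu₀]; linarith) 3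
  norm_num [Finset.sum_range_succ, abs_of_nonneg hu₀] at h
  calc |log (1 + u) - (u - u ^ 2 / 2 + u ^ 3 / 3)|
      = |-u + u ^ 2 / 2 + (-u) ^ 3 / 3 + log (1 + u)| := by ring_nf
    _ ≤ u ^ 4 / (1 - u) := h
    _ ≤ 2 * u ^ 4 := by
        rw [div_le_iff₀ (by linarith)]
        nlinarith [pow_nonneg hu₀ 4]

noncomputable def logSubDigammaRemainder (a : ℝ) : ℝ :=
  logSubDigamma a - 1 / (2 * a) - 1 / (12 * a ^ 2)

lemma tendsto_logSubDigammaRemainder_atTop : Tendsto logSubDigammaRemainder atTop (𝓝 0) := by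
  show Tendsto (fun a => logSubDigamma a - 1 / (2 * a) - 1 / (12 * a ^ 2)) atTop (𝓝 0)
  simpa only [sub_zero, id] using ((tendsto_logSubDigamma_atTop.sub
    ((tendsto_const_nhds (x := (1 : ℝ))).div_atTop (tendsto_id.const_mul_atTop two_pos))).sub
    ((tendsto_const_nhds (x := (1 : ℝ))).div_atTop ((tendsto_pow_atTop two_ne_zero).const_mul_atTop
      (by norm_num : (0 : ℝ) < 12))))

lemma abs_logSubDigammaRemainder_sub_add_one_le {x : ℝ} (hx : 2 ≤ x) :
    |logSubDigammaRemainder x - logSubDigammaRemainder (x + 1)| ≤ 3 / x ^ 4 := by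
  have hx₀ : 0 < x := by linarith
  set ρ := (3 * x + 4) / (12 * x ^ 3 * (x + 1) ^ 2) with hρ
  have hdecomp : logSubDigammaRemainder x - logSubDigammaRemainder (x + 1)
      = -(log (1 + 1 / x) - (1 / x - (1 / x) ^ 2 / 2 + (1 / x) ^ 3 / 3)) - ρ := by
    have hψ := logSubDigamma_sub_add_one hx₀
    have hrational : (1 / x) ^ 2 / 2 - (1 / x) ^ 3 / 3 - (1 / (2 * x) - 1 / (2 * (x + 1)))
        - (1 / (12 * x ^ 2) - 1 / (12 * (x + 1) ^ 2)) = -ρ := by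
      rw [hρ]
      field_simp
      ring
    rw [logSubDigammaRemainder, logSubDigammaRemainder]
    linarith
  have hρ_le : ρ ≤ 1 / x ^ 4 := by
    rw [hρ, div_le_div_iff₀ (by positivity) (by positivity)]
    nlinarith [pow_pos hx₀ 3, pow_pos hx₀ 4, pow_pos hx₀ 5]
  have htaylor := abs_log_one_add_sub_le (u := 1 / x) (by positivity)
    (by rw [div_le_div_iff₀ hx₀ two_pos]; linarith)
  rw [hdecomp]
  calc _ ≤ |log (1 + 1 / x) - (1 / x - (1 / x) ^ 2 / 2 + (1 / x) ^ 3 / 3)| + |ρ| := by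
        rw [← abs_neg (log _ - _)]
        exact abs_sub _ _
    _ ≤ 2 * (1 / x) ^ 4 + 1 / x ^ 4 := by
        rw [abs_of_pos (by positivity : 0 < ρ)]
        linarith
    _ = 3 / x ^ 4 := by ring

lemma abs_logSubDigammaRemainder_le {x : ℝ} (hx : 2 ≤ x) :
    |logSubDigammaRemainder x| ≤ 1 / (x - 1) ^ 3 := by
  refine abs_le_of_tendsto_of_abs_sub_le_sub (f := logSubDigammaRemainder)
    (u := fun y => 1 / (y - 1) ^ 3) (x₀ := 2) ?_ (fun y hy => ?_) (fun y hy => ?_) hx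
  · exact tendsto_logSubDigammaRemainder_atTop
  · have : 0 < y - 1 := by linarith
    positivity
  · refine (abs_logSubDigammaRemainder_sub_add_one_le hy).trans ?_
    have hy₁ : 0 < y - 1 := by linarith
    rw [add_sub_cancel_right, div_sub_div _ _ (by positivity) (by positivity),
      div_le_div_iff₀ (by positivity) (by positivity)]
    nlinarith [pow_pos hy₁ 3, mul_nonneg (pow_pos (by linarith : 0 < y) 3).le
      (by nlinarith : (0 : ℝ) ≤ 6 * y ^ 2 - 8 * y + 3)]

/-- As `M → +∞`, `E(M) - (1 + 1/(2M) + 1/(12M²)) = O(1/M³)`. -/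
theorem gamma_discrepancy_mean_asymptotic :
    (fun M : ℝ => gammaDiscrepancyMean M - (1 + 1 / (2 * M) + 1 / (12 * M ^ 2)))
      =O[Filter.atTop] fun M : ℝ => 1 / M ^ 3 := by
  refine Asymptotics.IsBigO.of_bound 8 ?_
  filter_upwards [eventually_ge_atTop 2] with M hM
  have hM₀ : 0 < M := by linarith
  have hremainder : gammaDiscrepancyMean M - (1 + 1 / (2 * M) + 1 / (12 * M ^ 2)) =
      logSubDigammaRemainder M := by
    rw [gammaDiscrepancyMean_eq hM₀, logSubDigammaRemainder]
    ring
  have hcube : 1 / (M - 1) ^ 3 ≤ 8 / M ^ 3 := by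
    rw [div_le_div_iff₀ (pow_pos (by linarith) 3) (by positivity)]
    nlinarith [mul_nonneg (by linarith : (0 : ℝ) ≤ M - 2)
      (by nlinarith : (0 : ℝ) ≤ 7 * M ^ 2 - 10 * M + 4)]
  rw [hremainder, norm_eq_abs, norm_of_nonneg (by positivity)]
  calc |logSubDigammaRemainder M| ≤ 8 / M ^ 3 := (abs_logSubDigammaRemainder_le hM).trans hcube
    _ = 8 * (1 / M ^ 3) := by ring
end

section
/- Let m, n be positive integers, let A₁, A₂, f ∈ ℝ^{m×n} with f_{i,j} > 0 for all i, j, and suppose Σ_{i,j} (A₁)_{i,j} ≠ 0. Define the discrepancy function K : ℝ → ℝ by K(τ) = (1/(mn)) Σ_{i,j} ( (A₁)_{i,j} τ + (A₂)_{i,j} + f_{i,j} · e^{−((A₁)_{i,j} τ + (A₂)_{i,j})} − log f_{i,j} ) − C̄. If C̄ ≥ (1/(mn)) Σ_{i,j} ( (A₂)_{i,j} + f_{i,j} · e^{−(A₂)_{i,j}} − log f_{i,j} ), then the equation K(τ) = 0 has at least one real solution. -/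
open Finset

/-- The discrepancy function
`K(τ) = (1/(mn)) Σ_{i,j} ((A₁)_{ij} τ + (A₂)_{ij} + f_{ij} e^{-((A₁)_{ij} τ + (A₂)_{ij})} - log f_{ij}) - C̄`. -/
noncomputable def discrepK (m n : ℕ) (A1 A2 f : Fin m → Fin n → ℝ) (C : ℝ) (τ : ℝ) : ℝ :=
  (1 / ((m : ℝ) * n)) *
      ∑ i, ∑ j,
        (A1 i j * τ + A2 i j + f i j * Real.exp (-(A1 i j * τ + A2 i j)) - Real.log (f i j))
    - C

/-! `K(0) ≤ 0` by the assumption on `C̄`, and dropping the positive exponential terms bounds `K`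
from below by an affine function of slope `Σ A₁ / (mn) ≠ 0`, which is nonnegative somewhere.
The intermediate value theorem then gives a zero of `K`. -/

theorem exists_eq_zero_of_affine_le {g : ℝ → ℝ} (hg : Continuous g) {x₀ a b : ℝ}
    (hx₀ : g x₀ ≤ 0) (ha : a ≠ 0) (hle : ∀ τ, a * τ + b ≤ g τ) : ∃ τ, g τ = 0 := by
  have hroot : 0 ≤ g (-b / a) := by
    simpa [mul_div_cancel₀ _ ha] using hle (-b / a)
  obtain ⟨τ, -, hτ⟩ := intermediate_value_uIcc (a := x₀) (b := -b / a) hg.continuousOn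
    (Set.mem_uIcc.mpr (Or.inl ⟨hx₀, hroot⟩))
  exact ⟨τ, hτ⟩

section discrepK

variable {m n : ℕ} (A1 A2 f : Fin m → Fin n → ℝ) (C : ℝ)

theorem continuous_discrepK : Continuous (discrepK m n A1 A2 f C) := by
  unfold discrepK
  fun_prop

theorem discrepK_zero : discrepK m n A1 A2 f C 0 =
    (1 / ((m : ℝ) * n)) *
      ∑ i, ∑ j, (A2 i j + f i j * Real.exp (-(A2 i j)) - Real.log (f i j)) - C := by
  simp [discrepK]

theorem affine_le_discrepK {A1 A2 f} (hf : ∀ i j, 0 ≤ f i j) (τ : ℝ) :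
    (1 / ((m : ℝ) * n)) * (∑ i, ∑ j, A1 i j) * τ +
        ((1 / ((m : ℝ) * n)) * ∑ i, ∑ j, (A2 i j - Real.log (f i j)) - C) ≤
      discrepK m n A1 A2 f C τ := by
  have hsum : ∑ i, ∑ j, (A1 i j * τ + (A2 i j - Real.log (f i j))) ≤
      ∑ i, ∑ j, (A1 i j * τ + A2 i j +
        f i j * Real.exp (-(A1 i j * τ + A2 i j)) - Real.log (f i j)) := by
    gcongr with i _ j _
    linarith [mul_nonneg (hf i j) (Real.exp_pos (-(A1 i j * τ + A2 i j))).le]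
  have hsplit : ∑ i, ∑ j, (A1 i j * τ + (A2 i j - Real.log (f i j))) =
      (∑ i, ∑ j, A1 i j) * τ + ∑ i, ∑ j, (A2 i j - Real.log (f i j)) := by
    simp only [sum_add_distrib, sum_mul]
  have hscaled := mul_le_mul_of_nonneg_left hsum (by positivity : 0 ≤ 1 / ((m : ℝ) * n))
  rw [hsplit] at hscaled
  unfold discrepK
  linarith

end discrepK

/-- If `Σ_{i,j} (A₁)_{ij} ≠ 0`, `f > 0` entrywise, and
`C̄ ≥ (1/(mn)) Σ_{i,j} ((A₂)_{ij} + f_{ij} e^{-(A₂)_{ij}} - log f_{ij})`, then the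
equation `K(τ) = 0` has at least one real solution. -/
theorem discrepancy_zero_exists (m n : ℕ) (hm : 0 < m) (hn : 0 < n)
    (A1 A2 f : Fin m → Fin n → ℝ) (hf : ∀ i j, 0 < f i j)
    (hA1 : (∑ i, ∑ j, A1 i j) ≠ 0) (C : ℝ)
    (hC : (1 / ((m : ℝ) * n)) *
        ∑ i, ∑ j, (A2 i j + f i j * Real.exp (-(A2 i j)) - Real.log (f i j)) ≤ C) :
    ∃ τ : ℝ, discrepK m n A1 A2 f C τ = 0 := by
  have hslope : 1 / ((m : ℝ) * n) * ∑ i, ∑ j, A1 i j ≠ 0 := by positivity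
  exact exists_eq_zero_of_affine_le (continuous_discrepK A1 A2 f C)
    ((discrepK_zero A1 A2 f C).trans_le (sub_nonpos.mpr hC)) hslope
    (affine_le_discrepK C fun i j => (hf i j).le)
end

section
/- (Corollary 1: convergence of the PLAD method with box constraint.) Let m, n be positive integers, f ∈ ℝ^{m×n} with f_{i,j} > 0 for all i, j, and D(u) = Σ_{i,j}(u_{i,j} + f_{i,j} e^{−u_{i,j}}) with gradient ∇D(u)_{i,j} = 1 − f_{i,j} e^{−u_{i,j}}. Let ∇ be the discrete gradient with Neumann boundary conditions, div its negative adjoint, ‖z‖₁ the isotropic TV norm, and ‖Δ‖ the operator norm of u ↦ −div(∇u). Fix reals c_inf < c_sup, let U = { u ∈ ℝ^{m×n} : c_inf ≤ u_{i,j} ≤ c_sup for all i,j } and let P_U denote the (entrywise) Euclidean projection onto U. Fix τ₀ > 0, ρ > 0, set L = (max_{i,j} f_{i,j})·e^{−c_inf}, and let 0 < δ < 1/(τ₀ L + ρ‖Δ‖). Let (u^k, z^k, b^k)_{k≥0} satisfy for all k: u^{k+1} = P_U( u^k − δ( τ₀ ∇D(u^k) + ρ div(z^k − ∇u^k) + div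 b^k ) ); z^{k+1} is the minimizer of w ↦ ‖w‖₁ + ⟨b^k, w − ∇u^{k+1}⟩ + (ρ/2)‖w − ∇u^{k+1}‖₂²; b^{k+1} = b^k + ρ(z^{k+1} − ∇u^{k+1}). Suppose (ū, z̄, b̄) with ū ∈ U satisfies: ∇ū = z̄; −b̄ is a subgradient of ‖·‖₁ at z̄; and there exists l̄ in the normal cone of U at ū with τ₀ ∇D(ū) + div b̄ + l̄ = 0. Then (u^k, z^k, b^k) converges to a point (u^∞, z^∞, b^∞) with u^∞ ∈ U satisfying these same first-order optimality conditions for the problem min_{u ∈ U, z} { τ₀ D(u) + ‖z‖₁ : ∇u = z }: ∇u^∞ = z^∞, −b^∞ is a subgradient of ‖·‖₁ at z^∞, and there exists l in the normal cone of U at u^∞ with τ₀ ∇D(u^∞) + div b^∞ + l = 0. -/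
/-!
For every KKT point `(v, c)` the energy
`δ⁻¹‖u - v‖² - ρ‖A (u - v)‖² + ρ‖z - A v‖² + ρ⁻¹‖b - c‖²` (with `A = ∇`, `div = -A†`)
decreases along the iteration by at least
`ρ‖z_{k+1} - A u_{k+1}‖² + (δ⁻¹ - τ₀L/2 - ρ‖Δ‖)‖u_{k+1} - u_k‖²`: this combines the projection
inequality, the cocoercivity of `τ₀∇D` on the box (constant `τ₀L`, since `e^{-t}` is
`e^{-c_inf}`-Lipschitz there) and the monotonicity of `∂‖·‖₁`. The step-size condition makes the
energy coercive, so the iterates are bounded and the residuals are summable. Every cluster point is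
then again a KKT point, and the energy centred at it decreases to `0`, which forces convergence of
the whole sequence. This argument runs in arbitrary finite-dimensional inner product spaces; the
theorem is its instance for images transported isometrically to Euclidean space.
-/

open Finset Filter Topology

noncomputable section

/-- Images: `m × n` real matrices. -/
abbrev Mat (m n : ℕ) := Fin m → Fin n → ℝ

/-- Frobenius inner product on `ℝ^{m×n}`. -/
def mInner {m n : ℕ} (u v : Mat m n) : ℝ := ∑ i, ∑ j, u i j * v i j

/-- Frobenius (Euclidean) norm on `ℝ^{m×n}`. -/
def mNorm {m n : ℕ} (u : Mat m n) : ℝ := Real.sqrt (mInner u u)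

/-- Inner product on pairs `z = (z¹, z²)`. -/
def pInner {m n : ℕ} (p q : Mat m n × Mat m n) : ℝ := mInner p.1 q.1 + mInner p.2 q.2

/-- Euclidean norm on pairs. -/
def pNorm {m n : ℕ} (p : Mat m n × Mat m n) : ℝ := Real.sqrt (pInner p p)

/-- Isotropic TV norm `‖z‖₁ = Σ_{i,j} √((z¹_{ij})² + (z²_{ij})²)`. -/
def tvNorm {m n : ℕ} (z : Mat m n × Mat m n) : ℝ :=
  ∑ i, ∑ j, Real.sqrt ((z.1 i j) ^ 2 + (z.2 i j) ^ 2)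

/-- Discrete gradient with Neumann boundary conditions. -/
def dgrad {m n : ℕ} (u : Mat m n) : Mat m n × Mat m n :=
  (fun i j => if h : (i : ℕ) + 1 < m then u ⟨(i : ℕ) + 1, h⟩ j - u i j else 0,
   fun i j => if h : (j : ℕ) + 1 < n then u i ⟨(j : ℕ) + 1, h⟩ - u i j else 0)

/-- Gradient of the data-fidelity term: `∇D(u)_{ij} = 1 - f_{ij} e^{-u_{ij}}`. -/
def gradD {m n : ℕ} (f u : Mat m n) : Mat m n := fun i j => 1 - f i j * Real.exp (-(u i j))

/-- Data-fidelity term `D(u) = Σ_{i,j} (u_{ij} + f_{ij} e^{-u_{ij}})`. -/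
def Dfun {m n : ℕ} (f u : Mat m n) : ℝ := ∑ i, ∑ j, (u i j + f i j * Real.exp (-(u i j)))

/-- `t` is a subgradient of the isotropic TV norm at `z`. -/
def IsSubgradTV {m n : ℕ} (t z : Mat m n × Mat m n) : Prop :=
  ∀ w, tvNorm z + pInner t (w - z) ≤ tvNorm w

/-- The box `U = { u : c_inf ≤ u_{ij} ≤ c_sup }`. -/
def inBox {m n : ℕ} (cinf csup : ℝ) (u : Mat m n) : Prop :=
  ∀ i j, cinf ≤ u i j ∧ u i j ≤ csup

/-- Entrywise Euclidean projection onto the box `U` (clamping to `[c_inf, c_sup]`). -/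
def boxProj {m n : ℕ} (cinf csup : ℝ) (u : Mat m n) : Mat m n :=
  fun i j => max cinf (min csup (u i j))

/-- `l` belongs to the normal cone of the box `U` at `x ∈ U`:
`⟨l, y - x⟩ ≤ 0` for all `y ∈ U`. -/
def InNormalCone {m n : ℕ} (cinf csup : ℝ) (x l : Mat m n) : Prop :=
  ∀ y : Mat m n, inBox cinf csup y → mInner l (y - x) ≤ 0

open RealInnerProductSpace
open scoped InnerProduct

theorem summable_of_succ_add_le {e q : ℕ → ℝ} (he : ∀ k, 0 ≤ e k) (hq : ∀ k, 0 ≤ q k)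
    (h : ∀ k, e (k + 1) + q k ≤ e k) : Summable q := by
  refine summable_of_sum_range_le hq (c := e 0) fun N => ?_
  calc ∑ k ∈ Finset.range N, q k ≤ ∑ k ∈ Finset.range N, (e k - e (k + 1)) :=
        Finset.sum_le_sum fun k _ => by linarith [h k]
    _ = e 0 - e N := Finset.sum_range_sub' e N
    _ ≤ e 0 := by linarith [he N]

theorem tendsto_of_mul_norm_sub_sq_le {X : Type*} [SeminormedAddCommGroup X] {x : ℕ → X} {a : X}
    {q : ℕ → ℝ} {c : ℝ} (hc : 0 < c) (hq : Tendsto q atTop (𝓝 0))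
    (h : ∀ k, c * ‖x k - a‖ ^ 2 ≤ q k) : Tendsto x atTop (𝓝 a) := by
  rw [tendsto_iff_norm_sub_tendsto_zero]
  have hsq : Tendsto (fun k => ‖x k - a‖ ^ 2) atTop (𝓝 0) := by
    refine squeeze_zero (fun k => sq_nonneg _) (fun k => ?_) (by simpa using hq.div_const c)
    rw [le_div_iff₀' hc]
    exact h k
  simpa [Real.sqrt_sq (norm_nonneg _)] using hsq.sqrt

theorem isBounded_range_of_mul_norm_sub_sq_le {X : Type*} [SeminormedAddCommGroup X]
    {x : ℕ → X} {a : X} {c M : ℝ} (hc : 0 < c) (h : ∀ k, c * ‖x k - a‖ ^ 2 ≤ M) :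
    Bornology.IsBounded (Set.range x) := by
  refine (Metric.isBounded_closedBall (x := a) (r := √(M / c))).subset ?_
  rintro _ ⟨k, rfl⟩
  rw [Metric.mem_closedBall, dist_eq_norm]
  exact Real.le_sqrt_of_sq_le ((le_div_iff₀' hc).2 (h k))

theorem tendsto_of_tendsto_map_succ {X Y : Type*} [TopologicalSpace X] [TopologicalSpace Y]
    (e : X ≃ₜ Y) {x : ℕ → X} {y : Y} (h : Tendsto (fun k => e (x (k + 1))) atTop (𝓝 y)) :
    Tendsto x atTop (𝓝 (e.symm y)) :=
  (tendsto_add_atTop_iff_nat 1).1 <| by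
    simpa [Function.comp_def] using (e.symm.continuous.tendsto y).comp h

section

variable {E F : Type*} [NormedAddCommGroup E] [InnerProductSpace ℝ E]
  [NormedAddCommGroup F] [InnerProductSpace ℝ F]

def HasSubgradient (φ : F → ℝ) (t x : F) : Prop :=
  ∀ w, φ x + ⟪t, w - x⟫ ≤ φ w

theorem HasSubgradient.inner_sub_nonpos {φ : F → ℝ} {b₁ b₂ z₁ z₂ : F}
    (h₁ : HasSubgradient φ (-b₁) z₁) (h₂ : HasSubgradient φ (-b₂) z₂) :
    ⟪b₁ - b₂, z₁ - z₂⟫ ≤ 0 := by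
  have h₁₂ := h₁ z₂
  have h₂₁ := h₂ z₁
  simp only [inner_neg_left, inner_sub_left, inner_sub_right] at h₁₂ h₂₁ ⊢
  linarith

theorem hasSubgradient_of_forall_le_add_sq {φ : F → ℝ} (hφ : ConvexOn ℝ Set.univ φ)
    {ρ : ℝ} {b d z : F}
    (hz : ∀ w, φ z + ⟪b, z - d⟫ + ρ / 2 * ‖z - d‖ ^ 2 ≤ φ w + ⟪b, w - d⟫ + ρ / 2 * ‖w - d‖ ^ 2) :
    HasSubgradient φ (-(b + ρ • (z - d))) z := by
  intro w
  have hstep : ∀ t ∈ Set.Ioo (0 : ℝ) 1,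
      φ z + ⟪-(b + ρ • (z - d)), w - z⟫ ≤ φ w + t * (ρ / 2 * ‖w - z‖ ^ 2) := by
    rintro t ⟨ht₀, ht₁⟩
    have hmin := hz (z + t • (w - z))
    have hconv : φ (z + t • (w - z)) ≤ (1 - t) * φ z + t * φ w := by
      have := hφ.2 (Set.mem_univ z) (Set.mem_univ w) (sub_nonneg.2 ht₁.le) ht₀.le
        (sub_add_cancel 1 t)
      rw [smul_eq_mul, smul_eq_mul] at this
      rw [show z + t • (w - z) = (1 - t) • z + t • w by module]
      exact this
    have hsplit : z + t • (w - z) - d = (z - d) + t • (w - z) := by abel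
    rw [hsplit, inner_add_right, norm_add_sq_real, inner_smul_right, inner_smul_right,
      norm_smul, mul_pow, Real.norm_eq_abs, sq_abs] at hmin
    have hlin : t * (φ z + ⟪-(b + ρ • (z - d)), w - z⟫)
        ≤ t * (φ w + t * (ρ / 2 * ‖w - z‖ ^ 2)) := by
      rw [inner_neg_left, inner_add_left, real_inner_smul_left]
      nlinarith
    exact le_of_mul_le_mul_left hlin ht₀
  have hlim : Tendsto (fun t : ℝ => φ w + t * (ρ / 2 * ‖w - z‖ ^ 2)) (𝓝[>] 0) (𝓝 (φ w)) := by
    have : Continuous (fun t : ℝ => φ w + t * (ρ / 2 * ‖w - z‖ ^ 2)) := by fun_prop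
    simpa using (this.tendsto 0).mono_left nhdsWithin_le_nhds
  exact ge_of_tendsto hlim (eventually_of_mem (Ioo_mem_nhdsGT one_pos) hstep)

theorem neg_two_inner_le_of_cocoercive {L : ℝ} (hL : 0 ≤ L) {g e s : E}
    (h : ‖g‖ ^ 2 ≤ L * ⟪g, e⟫) : -(2 * ⟪g, e + s⟫) ≤ L / 2 * ‖s‖ ^ 2 := by
  rcases hL.eq_or_lt with rfl | hL
  · have : g = 0 := by simpa using h
    simp [this]
  · have hsq := norm_add_sq_real g ((L / 2) • s)
    rw [inner_smul_right, norm_smul, mul_pow, Real.norm_eq_abs, sq_abs] at hsq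
    have : 0 ≤ L * (⟪g, e + s⟫ + L / 4 * ‖s‖ ^ 2) := by
      rw [inner_add_right]; nlinarith [sq_nonneg ‖g + (L / 2) • s‖]
    nlinarith [nonneg_of_mul_nonneg_right this hL]

theorem forward_backward_step_estimate {δ L : ℝ} (hδ : 0 < δ) (hL : 0 ≤ L)
    {x₀ x₁ v g₀ gv p pv : E} (hproj : ⟪x₀ - δ • (g₀ - p) - x₁, v - x₁⟫ ≤ 0)
    (hv : ⟪pv - gv, x₁ - v⟫ ≤ 0) (hco : ‖g₀ - gv‖ ^ 2 ≤ L * ⟪g₀ - gv, x₀ - v⟫) :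
    δ⁻¹ * (‖x₁ - v‖ ^ 2 - ‖x₀ - v‖ ^ 2) + (δ⁻¹ - L / 2) * ‖x₁ - x₀‖ ^ 2
      ≤ 2 * ⟪p - pv, x₁ - v⟫ := by
  have hco' := neg_two_inner_le_of_cocoercive hL (s := x₁ - x₀) hco
  rw [show x₀ - v + (x₁ - x₀) = x₁ - v by abel] at hco'
  have hproj' : ⟪x₁ - x₀, x₁ - v⟫ ≤ δ * (⟪p - pv, x₁ - v⟫ - ⟪g₀ - gv, x₁ - v⟫) := by
    rw [show x₀ - δ • (g₀ - p) - x₁ = -((x₁ - x₀) + δ • (g₀ - p)) by abel,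
      show v - x₁ = -(x₁ - v) by abel, inner_neg_neg, inner_add_left, real_inner_smul_left] at hproj
    simp only [inner_sub_left] at hproj hv ⊢
    nlinarith
  have hdist : ‖x₀ - v‖ ^ 2 = ‖x₁ - v‖ ^ 2 - 2 * ⟪x₁ - x₀, x₁ - v⟫ + ‖x₁ - x₀‖ ^ 2 := by
    rw [real_inner_comm, ← norm_sub_sq_real, sub_sub_sub_cancel_left]
  calc δ⁻¹ * (‖x₁ - v‖ ^ 2 - ‖x₀ - v‖ ^ 2) + (δ⁻¹ - L / 2) * ‖x₁ - x₀‖ ^ 2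
      = 2 * (δ⁻¹ * ⟪x₁ - x₀, x₁ - v⟫) - L / 2 * ‖x₁ - x₀‖ ^ 2 := by rw [hdist]; ring
    _ ≤ 2 * (⟪p - pv, x₁ - v⟫ - ⟪g₀ - gv, x₁ - v⟫) - L / 2 * ‖x₁ - x₀‖ ^ 2 := by
      gcongr; exact (inv_mul_le_iff₀ hδ).2 hproj'
    _ ≤ 2 * ⟪p - pv, x₁ - v⟫ := by linarith

theorem dual_step_estimate {ρ : ℝ} (hρ : 0 < ρ) {c₀ c₁ w a : F} (hc : c₁ = c₀ + ρ • (w - a))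
    (hw : ⟪c₁, w⟫ ≤ 0) :
    ρ⁻¹ * ‖c₁‖ ^ 2 + ρ * ‖w - a‖ ^ 2 ≤ ρ⁻¹ * ‖c₀‖ ^ 2 - 2 * ⟪c₁, a⟫ := by
  have hc₀ : ‖c₀‖ ^ 2 = ‖c₁‖ ^ 2 - 2 * (ρ * ⟪c₁, w - a⟫) + ρ ^ 2 * ‖w - a‖ ^ 2 := by
    rw [show c₀ = c₁ - ρ • (w - a) by rw [hc]; abel, norm_sub_sq_real, inner_smul_right,
      norm_smul, mul_pow, Real.norm_eq_abs, sq_abs]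
  rw [hc₀, inner_sub_right]
  field_simp
  nlinarith

theorem two_inner_residual_sub_le {w₀ w₁ a₀ a₁ : F} (h : ⟪w₁ - a₁, w₁ - w₀⟫ ≤ 0) :
    2 * ⟪(w₀ - a₀) - (w₁ - a₁), a₁⟫
      ≤ ‖w₀‖ ^ 2 - ‖w₁‖ ^ 2 + ‖a₁‖ ^ 2 - ‖a₀‖ ^ 2 + ‖a₁ - a₀‖ ^ 2 := by
  have hw := norm_sub_sq_real w₀ w₁
  have ha := norm_sub_sq_real a₁ a₀
  have hpos := sq_nonneg ‖w₀ - w₁‖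
  simp only [inner_sub_left, inner_sub_right, real_inner_self_eq_norm_sq] at h ⊢
  linarith [real_inner_comm w₀ w₁, real_inner_comm w₀ a₁, real_inner_comm w₁ a₁,
    real_inner_comm a₀ a₁]

/-- `δ⁻¹ ‖x - v‖² - ρ ‖A (x - v)‖²` is the squared distance in the metric `δ⁻¹ - ρ A†A`, positive
definite under the step-size condition. -/
def pladEnergy (A : E →L[ℝ] F) (ρ δ : ℝ) (v : E) (c : F) (x : E) (w d : F) : ℝ :=
  δ⁻¹ * ‖x - v‖ ^ 2 + ρ * ‖w - A v‖ ^ 2 - ρ * ‖A (x - v)‖ ^ 2 + ρ⁻¹ * ‖d - c‖ ^ 2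

theorem pladEnergy_lower_bounds {A : E →L[ℝ] F} {ρ δ Δ : ℝ}
    (hΔ : ∀ x, ‖A x‖ ^ 2 ≤ Δ * ‖x‖ ^ 2) (hρ : 0 < ρ) (hδ : 0 ≤ δ⁻¹ - ρ * Δ)
    (v : E) (c : F) (x : E) (w d : F) :
    (δ⁻¹ - ρ * Δ) * ‖x - v‖ ^ 2 ≤ pladEnergy A ρ δ v c x w d ∧
      ρ * ‖w - A v‖ ^ 2 ≤ pladEnergy A ρ δ v c x w d ∧
      ρ⁻¹ * ‖d - c‖ ^ 2 ≤ pladEnergy A ρ δ v c x w d := by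
  have hA := mul_le_mul_of_nonneg_left (hΔ (x - v)) hρ.le
  have hw := mul_nonneg hρ.le (sq_nonneg ‖w - A v‖)
  have hd := mul_nonneg (inv_nonneg.2 hρ.le) (sq_nonneg ‖d - c‖)
  have hx := mul_nonneg hδ (sq_nonneg ‖x - v‖)
  unfold pladEnergy
  refine ⟨?_, ?_, ?_⟩ <;> linarith

variable [CompleteSpace E] [CompleteSpace F]

structure IsKKTPoint (U : Set E) (φ : F → ℝ) (A : E →L[ℝ] F) (G : E → E) (v : E) (c : F) :
    Prop where
  mem : v ∈ U
  hasSubgradient : HasSubgradient φ (-c) (A v)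
  normal : ∀ y ∈ U, ⟪(A†) c - G v, y - v⟫ ≤ 0

/-- `primal` is the variational characterization of `u (k + 1)` as the projection onto `U` of a
forward step; `hasSubgradient` is what the `z`-update and the multiplier update give together. -/
structure IsPLADSequence (U : Set E) (φ : F → ℝ) (A : E →L[ℝ] F) (G : E → E) (ρ δ : ℝ)
    (u : ℕ → E) (z b : ℕ → F) : Prop where
  mem : ∀ k, u k ∈ U
  primal : ∀ k, ∀ y ∈ U,
    ⟪u k - δ • (G (u k) - (A†) (b k + ρ • (z k - A (u k)))) - u (k + 1), y - u (k + 1)⟫ ≤ 0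
  hasSubgradient : ∀ k, HasSubgradient φ (-b k) (z k)
  dual : ∀ k, b (k + 1) = b k + ρ • (z (k + 1) - A (u (k + 1)))

variable {U : Set E} {φ : F → ℝ} {A : E →L[ℝ] F} {G : E → E} {ρ δ L Δ : ℝ}
  {u : ℕ → E} {z b : ℕ → F}

theorem IsPLADSequence.pladEnergy_succ_add_le (hs : IsPLADSequence U φ A G ρ δ u z b)
    {v : E} {c : F} (hp : IsKKTPoint U φ A G v c) (hL : 0 ≤ L)
    (hG : ∀ x ∈ U, ∀ y ∈ U, ‖G x - G y‖ ^ 2 ≤ L * ⟪G x - G y, x - y⟫)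
    (hΔ : ∀ x, ‖A x‖ ^ 2 ≤ Δ * ‖x‖ ^ 2) (hρ : 0 < ρ) (hδ : 0 < δ) (k : ℕ) :
    pladEnergy A ρ δ v c (u (k + 1)) (z (k + 1)) (b (k + 1))
        + (ρ * ‖z (k + 1) - A (u (k + 1))‖ ^ 2 + (δ⁻¹ - L / 2 - ρ * Δ) * ‖u (k + 1) - u k‖ ^ 2)
      ≤ pladEnergy A ρ δ v c (u k) (z k) (b k) := by
  have hresidual : ∀ j, (z j - A v) - A (u j - v) = z j - A (u j) := fun j => by
    rw [map_sub]; abel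
  have hprimal := forward_backward_step_estimate hδ hL (hs.primal k v hp.mem)
    (hp.normal _ (hs.mem (k + 1))) (hG _ (hs.mem k) _ hp.mem)
  rw [← map_sub, ContinuousLinearMap.adjoint_inner_left,
    show b k + ρ • (z k - A (u k)) - c = (b k - c) + ρ • (z k - A (u k)) by abel] at hprimal
  have hdual := dual_step_estimate hρ (c₀ := b k - c) (c₁ := b (k + 1) - c)
    (w := z (k + 1) - A v) (a := A (u (k + 1) - v))
    (by rw [hs.dual k, hresidual]; abel)
    ((hs.hasSubgradient (k + 1)).inner_sub_nonpos hp.hasSubgradient)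
  have hmono : ⟪z (k + 1) - A (u (k + 1)), z (k + 1) - z k⟫ ≤ 0 := by
    have := (hs.hasSubgradient (k + 1)).inner_sub_nonpos (hs.hasSubgradient k)
    rw [hs.dual k, add_sub_cancel_left, real_inner_smul_left] at this
    exact nonpos_of_mul_nonpos_right this hρ
  have hcoupling := two_inner_residual_sub_le (w₀ := z k - A v) (a₀ := A (u k - v))
    (a₁ := A (u (k + 1) - v)) (by rwa [hresidual, sub_sub_sub_cancel_right])
  rw [hresidual, hresidual, ← map_sub, sub_sub_sub_cancel_right] at hcoupling
  rw [hresidual] at hdual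
  have hsplit : ⟪b (k + 1) - c, A (u (k + 1) - v)⟫
      = ⟪b k - c + ρ • (z k - A (u k)), A (u (k + 1) - v)⟫
        - ρ * ⟪z k - A (u k) - (z (k + 1) - A (u (k + 1))), A (u (k + 1) - v)⟫ := by
    rw [hs.dual k, ← real_inner_smul_left, ← inner_sub_left]
    congr 1
    module
  have hA := mul_le_mul_of_nonneg_left (hΔ (u (k + 1) - u k)) hρ.le
  have hcoupling' := mul_le_mul_of_nonneg_left hcoupling hρ.le
  unfold pladEnergy
  linarith

theorem IsPLADSequence.tendsto_residuals (hs : IsPLADSequence U φ A G ρ δ u z b)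
    {v : E} {c : F} (hp : IsKKTPoint U φ A G v c) (hL : 0 ≤ L)
    (hG : ∀ x ∈ U, ∀ y ∈ U, ‖G x - G y‖ ^ 2 ≤ L * ⟪G x - G y, x - y⟫)
    (hΔ : ∀ x, ‖A x‖ ^ 2 ≤ Δ * ‖x‖ ^ 2) (hρ : 0 < ρ) (hδ : 0 < δ) (hstep : L + ρ * Δ < δ⁻¹) :
    Tendsto (fun k => z k - A (u k)) atTop (𝓝 0) ∧
      Tendsto (fun k => u (k + 1) - u k) atTop (𝓝 0) := by
  set e := fun k => pladEnergy A ρ δ v c (u k) (z k) (b k)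
  set q := fun k => ρ * ‖z (k + 1) - A (u (k + 1))‖ ^ 2
    + (δ⁻¹ - L / 2 - ρ * Δ) * ‖u (k + 1) - u k‖ ^ 2
  have hε : 0 < δ⁻¹ - L / 2 - ρ * Δ := by linarith
  have hr : ∀ k, ρ * ‖z (k + 1) - A (u (k + 1)) - 0‖ ^ 2 ≤ q k := fun k => by
    simpa [q] using mul_nonneg hε.le (sq_nonneg ‖u (k + 1) - u k‖)
  have hsd : ∀ k, (δ⁻¹ - L / 2 - ρ * Δ) * ‖u (k + 1) - u k - 0‖ ^ 2 ≤ q k := fun k => by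
    simpa [q] using mul_nonneg hρ.le (sq_nonneg ‖z (k + 1) - A (u (k + 1))‖)
  have hq : Tendsto q atTop (𝓝 0) := by
    refine (summable_of_succ_add_le (e := e) (fun k => ?_) (fun k => ?_)
      (hs.pladEnergy_succ_add_le hp hL hG hΔ hρ hδ)).tendsto_atTop_zero
    · exact (mul_nonneg hρ.le (sq_nonneg _)).trans
        (pladEnergy_lower_bounds hΔ hρ (by linarith) v c (u k) (z k) (b k)).2.1
    · exact (mul_nonneg hρ.le (sq_nonneg _)).trans (by simpa using hr k)
  exact ⟨(tendsto_add_atTop_iff_nat 1).1 (tendsto_of_mul_norm_sub_sq_le hρ hq hr),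
    tendsto_of_mul_norm_sub_sq_le hε hq hsd⟩

theorem IsPLADSequence.pladEnergy_antitone (hs : IsPLADSequence U φ A G ρ δ u z b)
    {v : E} {c : F} (hp : IsKKTPoint U φ A G v c) (hL : 0 ≤ L)
    (hG : ∀ x ∈ U, ∀ y ∈ U, ‖G x - G y‖ ^ 2 ≤ L * ⟪G x - G y, x - y⟫)
    (hΔ : ∀ x, ‖A x‖ ^ 2 ≤ Δ * ‖x‖ ^ 2) (hρ : 0 < ρ) (hδ : 0 < δ) (hstep : L + ρ * Δ < δ⁻¹) :
    Antitone fun k => pladEnergy A ρ δ v c (u k) (z k) (b k) := by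
  refine antitone_nat_of_succ_le fun k => ?_
  have := hs.pladEnergy_succ_add_le hp hL hG hΔ hρ hδ k
  have hr := mul_nonneg hρ.le (sq_nonneg ‖z (k + 1) - A (u (k + 1))‖)
  have hs := mul_nonneg (by linarith : 0 ≤ δ⁻¹ - L / 2 - ρ * Δ) (sq_nonneg ‖u (k + 1) - u k‖)
  linarith

theorem IsPLADSequence.isBounded_range (hs : IsPLADSequence U φ A G ρ δ u z b)
    {v : E} {c : F} (hp : IsKKTPoint U φ A G v c) (hL : 0 ≤ L)
    (hG : ∀ x ∈ U, ∀ y ∈ U, ‖G x - G y‖ ^ 2 ≤ L * ⟪G x - G y, x - y⟫)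
    (hΔ : ∀ x, ‖A x‖ ^ 2 ≤ Δ * ‖x‖ ^ 2) (hρ : 0 < ρ) (hδ : 0 < δ) (hstep : L + ρ * Δ < δ⁻¹) :
    Bornology.IsBounded (Set.range fun k => (u k, z k, b k)) := by
  set e := fun k => pladEnergy A ρ δ v c (u k) (z k) (b k)
  have he : ∀ k, e k ≤ e 0 := fun k =>
    hs.pladEnergy_antitone hp hL hG hΔ hρ hδ hstep (Nat.zero_le k)
  have hε : 0 < δ⁻¹ - ρ * Δ := by linarith
  have hbd k := pladEnergy_lower_bounds hΔ hρ hε.le v c (u k) (z k) (b k)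
  have hu := isBounded_range_of_mul_norm_sub_sq_le hε fun k => (hbd k).1.trans (he k)
  have hz := isBounded_range_of_mul_norm_sub_sq_le hρ fun k => (hbd k).2.1.trans (he k)
  have hb := isBounded_range_of_mul_norm_sub_sq_le (inv_pos.2 hρ) fun k => (hbd k).2.2.trans (he k)
  refine (hu.prod (hz.prod hb)).subset ?_
  rintro _ ⟨k, rfl⟩
  exact ⟨⟨k, rfl⟩, ⟨k, rfl⟩, ⟨k, rfl⟩⟩

theorem IsPLADSequence.isKKTPoint_of_tendsto (hs : IsPLADSequence U φ A G ρ δ u z b)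
    (hU : IsClosed U) (hφ : Continuous φ) (hG : Continuous G) (hδ : 0 < δ)
    (hr : Tendsto (fun k => z k - A (u k)) atTop (𝓝 0))
    (hdiff : Tendsto (fun k => u (k + 1) - u k) atTop (𝓝 0)) {ψ : ℕ → ℕ} (hψ : StrictMono ψ)
    {v : E} {w c : F}
    (hlim : Tendsto (fun j => (u (ψ j), z (ψ j), b (ψ j))) atTop (𝓝 (v, w, c))) :
    w = A v ∧ IsKKTPoint U φ A G v c := by
  have hu : Tendsto (fun j => u (ψ j)) atTop (𝓝 v) := (continuous_fst.tendsto _).comp hlim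
  have hz : Tendsto (fun j => z (ψ j)) atTop (𝓝 w) :=
    ((continuous_fst.comp continuous_snd).tendsto _).comp hlim
  have hb : Tendsto (fun j => b (ψ j)) atTop (𝓝 c) :=
    ((continuous_snd.comp continuous_snd).tendsto _).comp hlim
  have hrψ := hr.comp hψ.tendsto_atTop
  have hu₁ : Tendsto (fun j => u (ψ j + 1)) atTop (𝓝 v) := by
    simpa using (hdiff.comp hψ.tendsto_atTop).add hu
  have hw : w = A v := by
    have := hz.sub ((A.continuous.tendsto v).comp hu)
    exact sub_eq_zero.1 (tendsto_nhds_unique this hrψ)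
  subst hw
  refine ⟨rfl, hU.mem_of_tendsto hu (Eventually.of_forall fun j => hs.mem _), fun x => ?_, ?_⟩
  · have hlhs : Tendsto (fun j => φ (z (ψ j)) + ⟪-b (ψ j), x - z (ψ j)⟫) atTop
        (𝓝 (φ (A v) + ⟪-c, x - A v⟫)) :=
      ((hφ.tendsto _).comp hz).add (hb.neg.inner (tendsto_const_nhds.sub hz))
    exact le_of_tendsto hlhs (Eventually.of_forall fun j => hs.hasSubgradient (ψ j) x)
  · intro y hy
    have hlhs : Tendsto (fun j => ⟪u (ψ j) - δ • (G (u (ψ j))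
          - (A†) (b (ψ j) + ρ • (z (ψ j) - A (u (ψ j))))) - u (ψ j + 1), y - u (ψ j + 1)⟫)
        atTop (𝓝 ⟪v - δ • (G v - (A†) (c + ρ • 0)) - v, y - v⟫) := by
      refine ((hu.sub (((hG.tendsto v).comp hu).sub (((A†).continuous.tendsto _).comp
        (hb.add (hrψ.const_smul ρ))) |>.const_smul δ)).sub hu₁).inner
        (tendsto_const_nhds.sub hu₁)
    have := le_of_tendsto hlhs (Eventually.of_forall fun j => hs.primal (ψ j) y hy)
    rw [smul_zero, add_zero, sub_sub_cancel_left, inner_neg_left, real_inner_smul_left,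
      neg_nonpos] at this
    rw [← neg_sub, inner_neg_left, neg_nonpos]
    exact nonneg_of_mul_nonneg_right this hδ

end

section

variable {E F : Type*} [NormedAddCommGroup E] [InnerProductSpace ℝ E] [FiniteDimensional ℝ E]
  [NormedAddCommGroup F] [InnerProductSpace ℝ F] [FiniteDimensional ℝ F]
  {U : Set E} {φ : F → ℝ} {A : E →L[ℝ] F} {G : E → E} {ρ δ L Δ : ℝ} {u : ℕ → E} {z b : ℕ → F}

theorem IsPLADSequence.tendsto_isKKTPoint (hs : IsPLADSequence U φ A G ρ δ u z b)
    (hU : IsClosed U) (hφ : Continuous φ) (hGc : Continuous G) (hL : 0 ≤ L)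
    (hG : ∀ x ∈ U, ∀ y ∈ U, ‖G x - G y‖ ^ 2 ≤ L * ⟪G x - G y, x - y⟫)
    (hΔ : ∀ x, ‖A x‖ ^ 2 ≤ Δ * ‖x‖ ^ 2) (hρ : 0 < ρ) (hδ : 0 < δ) (hstep : L + ρ * Δ < δ⁻¹)
    {v : E} {c : F} (hp : IsKKTPoint U φ A G v c) :
    ∃ v' c', Tendsto u atTop (𝓝 v') ∧ Tendsto z atTop (𝓝 (A v')) ∧ Tendsto b atTop (𝓝 c') ∧
      IsKKTPoint U φ A G v' c' := by
  obtain ⟨hr, hsd⟩ := hs.tendsto_residuals hp hL hG hΔ hρ hδ hstep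
  obtain ⟨⟨v', w', c'⟩, -, ψ, hψ, hlim⟩ := tendsto_subseq_of_bounded
    (hs.isBounded_range hp hL hG hΔ hρ hδ hstep) fun k => Set.mem_range_self k
  obtain ⟨rfl, hp'⟩ := hs.isKKTPoint_of_tendsto hU hφ hGc hδ hr hsd hψ hlim
  set e := fun k => pladEnergy A ρ δ v' c' (u k) (z k) (b k)
  have hε : 0 < δ⁻¹ - ρ * Δ := by linarith
  have hbd k := pladEnergy_lower_bounds hΔ hρ hε.le v' c' (u k) (z k) (b k)
  -- the energy centred at the cluster point vanishes along `ψ`, hence everywhere as it decreases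
  have he : Tendsto e atTop (𝓝 0) := by
    have hψe : Tendsto (e ∘ ψ) atTop (𝓝 0) := by
      have : Continuous fun p : E × F × F => pladEnergy A ρ δ v' c' p.1 p.2.1 p.2.2 := by
        unfold pladEnergy; fun_prop
      have h0 : pladEnergy A ρ δ v' c' v' (A v') c' = 0 := by simp [pladEnergy]
      have := (this.tendsto (v', A v', c')).comp hlim
      rwa [h0] at this
    exact (tendsto_iff_tendsto_subseq_of_antitone
      (hs.pladEnergy_antitone hp' hL hG hΔ hρ hδ hstep) hψ.tendsto_atTop).2 hψe
  exact ⟨v', c', tendsto_of_mul_norm_sub_sq_le hε he fun k => (hbd k).1,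
    tendsto_of_mul_norm_sub_sq_le hρ he fun k => (hbd k).2.1,
    tendsto_of_mul_norm_sub_sq_le (inv_pos.2 hρ) he fun k => (hbd k).2.2, hp'⟩

end

section Concrete

variable {m n : ℕ}

abbrev MatL2 (m n : ℕ) := EuclideanSpace ℝ (Fin m × Fin n)

abbrev PairL2 (m n : ℕ) := EuclideanSpace ℝ ((Fin m × Fin n) ⊕ (Fin m × Fin n))

def matL2 (m n : ℕ) : Mat m n ≃L[ℝ] MatL2 m n :=
  LinearEquiv.toContinuousLinearEquiv (𝕜 := ℝ)
    { toFun := fun u : Mat m n => WithLp.toLp 2 fun p => u p.1 p.2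
      invFun := fun (x : MatL2 m n) i j => x (i, j)
      map_add' := fun _ _ => rfl
      map_smul' := fun _ _ => rfl
      left_inv := fun _ => rfl
      right_inv := fun _ => rfl }

def pairL2 (m n : ℕ) : (Mat m n × Mat m n) ≃L[ℝ] PairL2 m n :=
  LinearEquiv.toContinuousLinearEquiv (𝕜 := ℝ)
    { toFun := fun p : Mat m n × Mat m n =>
        WithLp.toLp 2 (Sum.elim (fun q => p.1 q.1 q.2) (fun q => p.2 q.1 q.2))
      invFun := fun x : PairL2 m n => (fun i j => x (.inl (i, j)), fun i j => x (.inr (i, j)))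
      map_add' := fun _ _ => by ext (_ | _) <;> rfl
      map_smul' := fun _ _ => by ext (_ | _) <;> rfl
      left_inv := fun _ => rfl
      right_inv := fun _ => by ext (_ | _) <;> rfl }

@[simp]
theorem matL2_apply (u : Mat m n) (p : Fin m × Fin n) : matL2 m n u p = u p.1 p.2 := rfl

@[simp]
theorem pairL2_apply_inl (p : Mat m n × Mat m n) (q : Fin m × Fin n) :
    pairL2 m n p (.inl q) = p.1 q.1 q.2 :=
  rfl

@[simp]
theorem pairL2_apply_inr (p : Mat m n × Mat m n) (q : Fin m × Fin n) :
    pairL2 m n p (.inr q) = p.2 q.1 q.2 :=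
  rfl

theorem mInner_eq_inner (u v : Mat m n) : mInner u v = ⟪matL2 m n u, matL2 m n v⟫ := by
  simp [mInner, PiLp.inner_apply, Fintype.sum_prod_type, mul_comm]

theorem mNorm_eq_norm (u : Mat m n) : mNorm u = ‖matL2 m n u‖ := by
  rw [mNorm, mInner_eq_inner, real_inner_self_eq_norm_sq, Real.sqrt_sq (norm_nonneg _)]

theorem pInner_eq_inner (p q : Mat m n × Mat m n) :
    pInner p q = ⟪pairL2 m n p, pairL2 m n q⟫ := by
  simp [pInner, mInner, PiLp.inner_apply, Fintype.sum_sum_type, Fintype.sum_prod_type,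
    mul_comm]

theorem pNorm_eq_norm (p : Mat m n × Mat m n) : pNorm p = ‖pairL2 m n p‖ := by
  rw [pNorm, pInner_eq_inner, real_inner_self_eq_norm_sq, Real.sqrt_sq (norm_nonneg _)]

def dgradLinear (m n : ℕ) : Mat m n →ₗ[ℝ] (Mat m n × Mat m n) where
  toFun := dgrad
  map_add' u v := by
    ext i j <;> simp only [dgrad, Pi.add_apply, Prod.fst_add, Prod.snd_add] <;> split_ifs <;> ring
  map_smul' c u := by
    ext i j <;> simp only [dgrad, Pi.smul_apply, Prod.smul_fst, Prod.smul_snd, smul_eq_mul,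
      RingHom.id_apply] <;> split_ifs <;> ring

def gradL2 (m n : ℕ) : MatL2 m n →L[ℝ] PairL2 m n :=
  LinearMap.toContinuousLinearMap
    ((pairL2 m n).toLinearMap ∘ₗ dgradLinear m n ∘ₗ (matL2 m n).symm.toLinearMap)

theorem gradL2_matL2 (u : Mat m n) : gradL2 m n (matL2 m n u) = pairL2 m n (dgrad u) := by
  simp [gradL2, dgradLinear]

theorem convexOn_tvNorm : ConvexOn ℝ Set.univ (tvNorm : Mat m n × Mat m n → ℝ) := by
  refine ⟨convex_univ, fun x _ y _ a b ha hb hab => ?_⟩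
  simp only [tvNorm, smul_eq_mul, Finset.mul_sum, ← Finset.sum_add_distrib]
  refine Finset.sum_le_sum fun i _ => Finset.sum_le_sum fun j _ => ?_
  -- `ℂ` serves as the Euclidean plane
  have := (convexOn_norm (convex_univ (E := ℂ))).2 (Set.mem_univ ⟨x.1 i j, x.2 i j⟩)
    (Set.mem_univ ⟨y.1 i j, y.2 i j⟩) ha hb hab
  simpa [Complex.norm_eq_sqrt_sq_add_sq] using this

theorem continuous_tvNorm : Continuous (tvNorm : Mat m n × Mat m n → ℝ) := by
  unfold tvNorm; fun_prop

theorem isClosed_setOf_inBox (cinf csup : ℝ) : IsClosed {u : Mat m n | inBox cinf csup u} := by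
  have hU : {u : Mat m n | inBox cinf csup u}
      = ⋂ i, ⋂ j, (fun u : Mat m n => u i j) ⁻¹' Set.Icc cinf csup := by
    ext u; simp [inBox]
  rw [hU]
  exact isClosed_iInter fun i => isClosed_iInter fun j => isClosed_Icc.preimage (by fun_prop)

theorem inBox_boxProj {cinf csup : ℝ} (h : cinf ≤ csup) (u : Mat m n) :
    inBox cinf csup (boxProj cinf csup u) :=
  fun _ _ => ⟨le_max_left _ _, max_le h (min_le_left _ _)⟩

theorem mInner_sub_boxProj_nonpos {cinf csup : ℝ} {y : Mat m n} (hy : inBox cinf csup y)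
    (u : Mat m n) : mInner (u - boxProj cinf csup u) (y - boxProj cinf csup u) ≤ 0 := by
  refine Finset.sum_nonpos fun i _ => Finset.sum_nonpos fun j _ => ?_
  obtain ⟨hy₁, hy₂⟩ := hy i j
  simp only [boxProj, Pi.sub_apply, max_def, min_def]
  split_ifs <;> nlinarith

theorem sq_mul_exp_neg_sub_le {a c K s t : ℝ} (ha : 0 ≤ a) (hK : a * Real.exp (-c) ≤ K)
    (hs : c ≤ s) (ht : c ≤ t) :
    (a * (Real.exp (-t) - Real.exp (-s))) ^ 2
      ≤ K * (a * (Real.exp (-t) - Real.exp (-s)) * (s - t)) := by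
  wlog hts : t ≤ s generalizing s t
  · convert this ht hs (le_of_not_ge hts) using 1 <;> ring
  have hD₀ : 0 ≤ Real.exp (-t) - Real.exp (-s) :=
    sub_nonneg.2 (Real.exp_le_exp.2 (neg_le_neg hts))
  have hD : Real.exp (-t) - Real.exp (-s) ≤ Real.exp (-c) * (s - t) := by
    have h₁ := Real.add_one_le_exp (-(s - t))
    have h₂ : Real.exp (-s) = Real.exp (-t) * Real.exp (-(s - t)) := by
      rw [← Real.exp_add]; ring_nf
    have h₃ : Real.exp (-t) ≤ Real.exp (-c) := Real.exp_le_exp.2 (by linarith)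
    nlinarith [Real.exp_pos (-t)]
  have haD := mul_nonneg ha hD₀
  calc (a * (Real.exp (-t) - Real.exp (-s))) ^ 2
      ≤ a * (Real.exp (-t) - Real.exp (-s)) * (a * (Real.exp (-c) * (s - t))) := by
        rw [sq]; exact mul_le_mul_of_nonneg_left (mul_le_mul_of_nonneg_left hD ha) haD
    _ = a * Real.exp (-c) * (a * (Real.exp (-t) - Real.exp (-s)) * (s - t)) := by ring
    _ ≤ K * (a * (Real.exp (-t) - Real.exp (-s)) * (s - t)) :=
        mul_le_mul_of_nonneg_right hK (mul_nonneg haD (by linarith))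

theorem mNorm_smul_gradD_sub_sq_le {f : Mat m n} (hf : ∀ i j, 0 ≤ f i j) {τ0 cinf csup : ℝ}
    (hτ0 : 0 ≤ τ0) {u v : Mat m n} (hu : inBox cinf csup u) (hv : inBox cinf csup v) :
    mNorm (τ0 • gradD f u - τ0 • gradD f v) ^ 2
      ≤ τ0 * ((⨆ i, ⨆ j, f i j) * Real.exp (-cinf))
        * mInner (τ0 • gradD f u - τ0 • gradD f v) (u - v) := by
  rw [mNorm_eq_norm, ← real_inner_self_eq_norm_sq, ← mInner_eq_inner, mInner, mInner,
    Finset.mul_sum]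
  refine Finset.sum_le_sum fun i _ => ?_
  rw [Finset.mul_sum]
  refine Finset.sum_le_sum fun j _ => ?_
  have hfij : f i j ≤ ⨆ i, ⨆ j, f i j :=
    le_ciSup_of_le (Finite.bddAbove_range _) i (le_ciSup (Finite.bddAbove_range _) j)
  have hentry : (τ0 • gradD f u - τ0 • gradD f v) i j
      = τ0 * f i j * (Real.exp (-v i j) - Real.exp (-u i j)) := by
    simp only [gradD, Pi.sub_apply, Pi.smul_apply, smul_eq_mul]; ring
  rw [hentry, ← sq, Pi.sub_apply]
  refine sq_mul_exp_neg_sub_le (mul_nonneg hτ0 (hf i j)) ?_ (hu i j).1 (hv i j).1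
  rw [mul_assoc]
  exact mul_le_mul_of_nonneg_left (mul_le_mul_of_nonneg_right hfij (Real.exp_pos _).le) hτ0

theorem continuous_smul_gradD (f : Mat m n) (τ0 : ℝ) :
    Continuous fun u : Mat m n => τ0 • gradD f u := by
  unfold gradD; fun_prop

def boxL2 (m n : ℕ) (cinf csup : ℝ) : Set (MatL2 m n) :=
  (matL2 m n).symm ⁻¹' {u | inBox cinf csup u}

def tvNormL2 (m n : ℕ) (q : PairL2 m n) : ℝ := tvNorm ((pairL2 m n).symm q)

def gradDL2 (f : Mat m n) (τ0 : ℝ) (x : MatL2 m n) : MatL2 m n :=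
  matL2 m n (τ0 • gradD f ((matL2 m n).symm x))

theorem isClosed_boxL2 (cinf csup : ℝ) : IsClosed (boxL2 m n cinf csup) :=
  (isClosed_setOf_inBox cinf csup).preimage (matL2 m n).symm.continuous

theorem convexOn_tvNormL2 : ConvexOn ℝ Set.univ (tvNormL2 m n) := by
  have h := convexOn_tvNorm.comp_linearMap (pairL2 m n).symm.toLinearEquiv.toLinearMap
  rw [Set.preimage_univ] at h
  exact h

theorem continuous_tvNormL2 : Continuous (tvNormL2 m n) :=
  continuous_tvNorm.comp (pairL2 m n).symm.continuous

theorem continuous_gradDL2 (f : Mat m n) (τ0 : ℝ) : Continuous (gradDL2 f τ0) :=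
  (matL2 m n).continuous.comp ((continuous_smul_gradD f τ0).comp (matL2 m n).symm.continuous)

theorem gradDL2_cocoercive {f : Mat m n} (hf : ∀ i j, 0 ≤ f i j) {τ0 cinf csup : ℝ}
    (hτ0 : 0 ≤ τ0) :
    ∀ x ∈ boxL2 m n cinf csup, ∀ y ∈ boxL2 m n cinf csup,
      ‖gradDL2 f τ0 x - gradDL2 f τ0 y‖ ^ 2
        ≤ τ0 * ((⨆ i, ⨆ j, f i j) * Real.exp (-cinf))
          * ⟪gradDL2 f τ0 x - gradDL2 f τ0 y, x - y⟫ := by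
  intro x hx y hy
  have := mNorm_smul_gradD_sub_sq_le hf hτ0 hx hy
  rwa [mNorm_eq_norm, mInner_eq_inner, map_sub, map_sub, ContinuousLinearEquiv.apply_symm_apply,
    ContinuousLinearEquiv.apply_symm_apply] at this

theorem hasSubgradient_tvNormL2_iff (t x : Mat m n × Mat m n) :
    HasSubgradient (tvNormL2 m n) (pairL2 m n t) (pairL2 m n x) ↔ IsSubgradTV t x := by
  refine ⟨fun h w => ?_, fun h w => ?_⟩
  · simpa [tvNormL2, pInner_eq_inner] using h (pairL2 m n w)
  · obtain ⟨w, rfl⟩ := (pairL2 m n).surjective w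
    simpa [tvNormL2, pInner_eq_inner] using h w

section Divergence

variable {dv : Mat m n × Mat m n → Mat m n}
  (hadj : ∀ (u : Mat m n) (p : Mat m n × Mat m n), pInner (dgrad u) p = -mInner u (dv p))
include hadj

theorem matL2_dv (q : Mat m n × Mat m n) :
    matL2 m n (dv q) = -((gradL2 m n)†) (pairL2 m n q) := by
  refine ext_inner_left ℝ fun x => ?_
  obtain ⟨u, rfl⟩ := (matL2 m n).surjective x
  rw [inner_neg_right, ContinuousLinearMap.adjoint_inner_right, gradL2_matL2, ← pInner_eq_inner,
    hadj, ← mInner_eq_inner, neg_neg]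

theorem norm_gradL2_sq_le {Δ : ℝ} (hΔ : ∀ u : Mat m n, mNorm (dv (dgrad u)) ≤ Δ * mNorm u)
    (x : MatL2 m n) : ‖gradL2 m n x‖ ^ 2 ≤ Δ * ‖x‖ ^ 2 := by
  obtain ⟨u, rfl⟩ := (matL2 m n).surjective x
  have h := hΔ u
  rw [mNorm_eq_norm, mNorm_eq_norm] at h
  calc ‖gradL2 m n (matL2 m n u)‖ ^ 2 = -⟪matL2 m n u, matL2 m n (dv (dgrad u))⟫ := by
        rw [← real_inner_self_eq_norm_sq, gradL2_matL2, ← pInner_eq_inner, hadj, mInner_eq_inner]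
    _ ≤ ‖matL2 m n u‖ * ‖matL2 m n (dv (dgrad u))‖ := by
        rw [← inner_neg_right]
        exact (real_inner_le_norm _ _).trans_eq (by rw [norm_neg])
    _ ≤ Δ * ‖matL2 m n u‖ ^ 2 := by nlinarith [norm_nonneg (matL2 m n u)]

theorem isKKTPoint_iff {f : Mat m n} {τ0 cinf csup : ℝ} (v : Mat m n) (c : Mat m n × Mat m n) :
    IsKKTPoint (boxL2 m n cinf csup) (tvNormL2 m n) (gradL2 m n) (gradDL2 f τ0) (matL2 m n v)
        (pairL2 m n c) ↔
      inBox cinf csup v ∧ IsSubgradTV (-c) (dgrad v) ∧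
        ∃ l, InNormalCone cinf csup v l ∧ τ0 • gradD f v + dv c + l = 0 := by
  have hmem : ∀ y, matL2 m n y ∈ boxL2 m n cinf csup ↔ inBox cinf csup y := fun y => by
    simp [boxL2]
  have hsub : HasSubgradient (tvNormL2 m n) (-pairL2 m n c) (gradL2 m n (matL2 m n v))
      ↔ IsSubgradTV (-c) (dgrad v) := by
    rw [gradL2_matL2, ← map_neg, hasSubgradient_tvNormL2_iff]
  have hnormal : (∀ y ∈ boxL2 m n cinf csup,
        ⟪((gradL2 m n)†) (pairL2 m n c) - gradDL2 f τ0 (matL2 m n v), y - matL2 m n v⟫ ≤ 0)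
      ↔ ∃ l, InNormalCone cinf csup v l ∧ τ0 • gradD f v + dv c + l = 0 := by
    have hl : ((gradL2 m n)†) (pairL2 m n c) - gradDL2 f τ0 (matL2 m n v)
        = matL2 m n (-(τ0 • gradD f v + dv c)) := by
      simp only [gradDL2, ContinuousLinearEquiv.symm_apply_apply, map_neg, map_add,
        matL2_dv hadj]
      abel
    rw [hl]
    refine ⟨fun h => ⟨_, fun y hy => ?_, add_neg_cancel _⟩, fun ⟨l, hl, heq⟩ y hy => ?_⟩
    · simpa [mInner_eq_inner] using h _ ((hmem y).2 hy)
    · obtain ⟨y, rfl⟩ := (matL2 m n).surjective y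
      rw [← eq_neg_of_add_eq_zero_right heq, ← map_sub, ← mInner_eq_inner]
      exact hl y ((hmem y).1 hy)
  exact ⟨fun ⟨h₁, h₂, h₃⟩ => ⟨(hmem v).1 h₁, hsub.1 h₂, hnormal.1 h₃⟩,
    fun ⟨h₁, h₂, h₃⟩ => ⟨(hmem v).2 h₁, hsub.2 h₂, hnormal.2 h₃⟩⟩

theorem matL2_forward_step (f : Mat m n) (τ0 ρ δ : ℝ) (u : Mat m n) (z b : Mat m n × Mat m n) :
    matL2 m n (u - δ • (τ0 • gradD f u + ρ • dv (z - dgrad u) + dv b))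
      = matL2 m n u - δ • (gradDL2 f τ0 (matL2 m n u)
        - ((gradL2 m n)†) (pairL2 m n b + ρ • (pairL2 m n z - gradL2 m n (matL2 m n u)))) := by
  simp only [map_sub, map_add, map_smul, matL2_dv hadj, gradDL2, gradL2_matL2,
    ContinuousLinearEquiv.symm_apply_apply]
  module

theorem isPLADSequence_succ {f : Mat m n} {cinf csup τ0 ρ δ : ℝ} (hbox : cinf ≤ csup)
    {u : ℕ → Mat m n} {z b : ℕ → Mat m n × Mat m n}
    (hu : ∀ k, u (k + 1) = boxProj cinf csup
      (u k - δ • (τ0 • gradD f (u k) + ρ • dv (z k - dgrad (u k)) + dv (b k))))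
    (hz : ∀ k, ∀ w : Mat m n × Mat m n,
      tvNorm (z (k + 1)) + pInner (b k) (z (k + 1) - dgrad (u (k + 1)))
          + ρ / 2 * (pNorm (z (k + 1) - dgrad (u (k + 1)))) ^ 2
        ≤ tvNorm w + pInner (b k) (w - dgrad (u (k + 1)))
          + ρ / 2 * (pNorm (w - dgrad (u (k + 1)))) ^ 2)
    (hb : ∀ k, b (k + 1) = b k + ρ • (z (k + 1) - dgrad (u (k + 1)))) :
    IsPLADSequence (boxL2 m n cinf csup) (tvNormL2 m n) (gradL2 m n) (gradDL2 f τ0) ρ δ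
      (fun k => matL2 m n (u (k + 1))) (fun k => pairL2 m n (z (k + 1)))
      (fun k => pairL2 m n (b (k + 1))) where
  mem k := by
    simpa [boxL2, hu k] using inBox_boxProj hbox _
  primal k y hy := by
    obtain ⟨y, rfl⟩ := (matL2 m n).surjective y
    have := mInner_sub_boxProj_nonpos (by simpa [boxL2] using hy)
      (u (k + 1) - δ • (τ0 • gradD f (u (k + 1)) + ρ • dv (z (k + 1) - dgrad (u (k + 1)))
        + dv (b (k + 1))))
    rwa [← hu (k + 1), mInner_eq_inner, map_sub, matL2_forward_step hadj, map_sub] at this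
  hasSubgradient k := by
    have := hasSubgradient_of_forall_le_add_sq convexOn_tvNormL2 (ρ := ρ) (b := pairL2 m n (b k))
      (d := pairL2 m n (dgrad (u (k + 1)))) (z := pairL2 m n (z (k + 1))) fun w => by
        obtain ⟨w, rfl⟩ := (pairL2 m n).surjective w
        simpa [tvNormL2, pInner_eq_inner, pNorm_eq_norm] using hz k w
    rwa [← map_sub, ← map_smul, ← map_add, ← hb k] at this
  dual k := by
    simp only [hb (k + 1), map_add, map_smul, map_sub, gradL2_matL2]

end Divergence

end Concrete

theorem plad_box_converges_general
    (m n : ℕ)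
    (f : Mat m n) (hf : ∀ i j, 0 < f i j)
    -- `dv` is the negative adjoint of the discrete gradient
    (dv : Mat m n × Mat m n → Mat m n)
    (hadj : ∀ (u : Mat m n) (p : Mat m n × Mat m n), pInner (dgrad u) p = -mInner u (dv p))
    -- `Δnorm` is the operator norm of `u ↦ -div (∇ u)`
    (Δnorm : ℝ) (hΔ : ∀ u : Mat m n, mNorm (dv (dgrad u)) ≤ Δnorm * mNorm u)
    (cinf csup : ℝ) (hbox : cinf < csup)
    (τ0 ρ : ℝ) (hτ0 : 0 < τ0) (hρ : 0 < ρ)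
    -- step-size restriction with `L = (max_{i,j} f_{ij}) e^{-c_inf}`
    (L : ℝ) (hL : L = (⨆ i, ⨆ j, f i j) * Real.exp (-cinf))
    (δ : ℝ) (hδ0 : 0 < δ) (hδ : δ < 1 / (τ0 * L + ρ * Δnorm))
    -- the sequences of the algorithm
    (u : ℕ → Mat m n) (z b : ℕ → Mat m n × Mat m n)
    (hu : ∀ k, u (k + 1) = boxProj cinf csup
      (u k - δ • (τ0 • gradD f (u k) + ρ • dv (z k - dgrad (u k)) + dv (b k))))
    (hz : ∀ k, ∀ w : Mat m n × Mat m n,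
      tvNorm (z (k + 1)) + pInner (b k) (z (k + 1) - dgrad (u (k + 1)))
          + ρ / 2 * (pNorm (z (k + 1) - dgrad (u (k + 1)))) ^ 2
        ≤ tvNorm w + pInner (b k) (w - dgrad (u (k + 1)))
          + ρ / 2 * (pNorm (w - dgrad (u (k + 1)))) ^ 2)
    (hb : ∀ k, b (k + 1) = b k + ρ • (z (k + 1) - dgrad (u (k + 1))))
    -- first-order optimality conditions for `(ū, z̄, b̄)` with `ū ∈ U`
    (ubar : Mat m n) (zbar bbar : Mat m n × Mat m n)
    (hubarU : inBox cinf csup ubar)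
    (hopt1 : dgrad ubar = zbar)
    (hopt3 : IsSubgradTV (-bbar) zbar)
    (hopt2 : ∃ lbar : Mat m n, InNormalCone cinf csup ubar lbar ∧
      τ0 • gradD f ubar + dv bbar + lbar = 0) :
    ∃ (uinf : Mat m n) (zinf binf : Mat m n × Mat m n),
      Filter.Tendsto u Filter.atTop (nhds uinf) ∧
      Filter.Tendsto z Filter.atTop (nhds zinf) ∧
      Filter.Tendsto b Filter.atTop (nhds binf) ∧
      inBox cinf csup uinf ∧
      dgrad uinf = zinf ∧
      IsSubgradTV (-binf) zinf ∧
      ∃ l : Mat m n, InNormalCone cinf csup uinf l ∧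
        τ0 • gradD f uinf + dv binf + l = 0 := by
  have hS : 0 < τ0 * L + ρ * Δnorm := one_div_pos.1 (hδ0.trans hδ)
  have hstep : τ0 * L + ρ * Δnorm < δ⁻¹ := (lt_inv_comm₀ hδ0 hS).1 (by rwa [← one_div])
  have hL0 : 0 ≤ τ0 * L := hL ▸ mul_nonneg hτ0.le (mul_nonneg
    (Real.iSup_nonneg fun i => Real.iSup_nonneg fun j => (hf i j).le) (Real.exp_pos _).le)
  have hseq := isPLADSequence_succ hadj hbox.le hu hz hb
  have hkkt₀ := (isKKTPoint_iff hadj ubar bbar).2 ⟨hubarU, hopt1 ▸ hopt3, hopt2⟩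
  obtain ⟨v, c, hv, hw, hc, hkkt⟩ := hseq.tendsto_isKKTPoint (isClosed_boxL2 cinf csup)
    continuous_tvNormL2 (continuous_gradDL2 f τ0) hL0
    (hL ▸ gradDL2_cocoercive (fun i j => (hf i j).le) hτ0.le) (norm_gradL2_sq_le hadj hΔ) hρ hδ0
    hstep hkkt₀
  rw [← (matL2 m n).apply_symm_apply v, ← (pairL2 m n).apply_symm_apply c,
    isKKTPoint_iff hadj] at hkkt
  rw [← (matL2 m n).apply_symm_apply v, gradL2_matL2] at hw
  refine ⟨(matL2 m n).symm v, dgrad ((matL2 m n).symm v), (pairL2 m n).symm c,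
    tendsto_of_tendsto_map_succ (matL2 m n).toHomeomorph hv, ?_,
    tendsto_of_tendsto_map_succ (pairL2 m n).toHomeomorph hc, hkkt.1, rfl, hkkt.2⟩
  simpa using tendsto_of_tendsto_map_succ (pairL2 m n).toHomeomorph hw

/-- Corollary 1: convergence of the PLAD method with box constraint to a point
satisfying the first-order optimality conditions of
`min_{u ∈ U, z} { τ₀ D(u) + ‖z‖₁ : ∇u = z }`. -/
theorem plad_box_converges
    (m n : ℕ) (hm : 0 < m) (hn : 0 < n)
    (f : Mat m n) (hf : ∀ i j, 0 < f i j)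
    -- `dv` is the negative adjoint of the discrete gradient
    (dv : Mat m n × Mat m n → Mat m n)
    (hadj : ∀ (u : Mat m n) (p : Mat m n × Mat m n), pInner (dgrad u) p = -mInner u (dv p))
    -- `Δnorm` is the operator norm of `u ↦ -div (∇ u)`
    (Δnorm : ℝ) (hΔ : ∀ u : Mat m n, mNorm (dv (dgrad u)) ≤ Δnorm * mNorm u)
    (cinf csup : ℝ) (hbox : cinf < csup)
    (τ0 ρ : ℝ) (hτ0 : 0 < τ0) (hρ : 0 < ρ)
    -- step-size restriction with `L = (max_{i,j} f_{ij}) e^{-c_inf}`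
    (L : ℝ) (hL : L = (⨆ i, ⨆ j, f i j) * Real.exp (-cinf))
    (δ : ℝ) (hδ0 : 0 < δ) (hδ : δ < 1 / (τ0 * L + ρ * Δnorm))
    -- the sequences of the algorithm
    (u : ℕ → Mat m n) (z b : ℕ → Mat m n × Mat m n)
    (hu : ∀ k, u (k + 1) = boxProj cinf csup
      (u k - δ • (τ0 • gradD f (u k) + ρ • dv (z k - dgrad (u k)) + dv (b k))))
    (hz : ∀ k, ∀ w : Mat m n × Mat m n,
      tvNorm (z (k + 1)) + pInner (b k) (z (k + 1) - dgrad (u (k + 1)))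
          + ρ / 2 * (pNorm (z (k + 1) - dgrad (u (k + 1)))) ^ 2
        ≤ tvNorm w + pInner (b k) (w - dgrad (u (k + 1)))
          + ρ / 2 * (pNorm (w - dgrad (u (k + 1)))) ^ 2)
    (hb : ∀ k, b (k + 1) = b k + ρ • (z (k + 1) - dgrad (u (k + 1))))
    -- first-order optimality conditions for `(ū, z̄, b̄)` with `ū ∈ U`
    (ubar : Mat m n) (zbar bbar : Mat m n × Mat m n)
    (hubarU : inBox cinf csup ubar)
    (hopt1 : dgrad ubar = zbar)
    (hopt3 : IsSubgradTV (-bbar) zbar)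
    (hopt2 : ∃ lbar : Mat m n, InNormalCone cinf csup ubar lbar ∧
      τ0 • gradD f ubar + dv bbar + lbar = 0) :
    ∃ (uinf : Mat m n) (zinf binf : Mat m n × Mat m n),
      Filter.Tendsto u Filter.atTop (nhds uinf) ∧
      Filter.Tendsto z Filter.atTop (nhds zinf) ∧
      Filter.Tendsto b Filter.atTop (nhds binf) ∧
      inBox cinf csup uinf ∧
      dgrad uinf = zinf ∧
      IsSubgradTV (-binf) zinf ∧
      ∃ l : Mat m n, InNormalCone cinf csup uinf l ∧
        τ0 • gradD f uinf + dv binf + l = 0 :=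
  plad_box_converges_general m n f hf dv hadj Δnorm hΔ cinf csup hbox τ0 ρ hτ0 hρ L hL δ hδ0 hδ u z
    b hu hz hb ubar zbar bbar hubarU hopt1 hopt3 hopt2
end
end
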